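/- arXiv:2007.07104 — 8 statements merged into one kernel-verified Lean document; each statement's English description precedes it below -/
import Mathlib

section
/- If a mechanism φ is strategyproof, then it is separation upper invariant: for every separation (R,R') with split at index κ, the probability φ assigns to each indifference class M_k for k < κ is the same under R and R'. -/
open Finset

/-- An ordered partition `M_1 P ... P M_K` of a finite set `α` is encoded by a rank
function `R : α → ℕ`: alternative `a` lies in class `M_{R a}` (0-indexed), and lower
rank means more preferred.  `j` is weakly preferred to `a` iff `R j ≤ R a`. -/
def classOf {α : Type} [Fintype α] (R : α → ℕ) (k : ℕ) : Finset α :=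
  Finset.univ.filter fun a => R a = k

/-- `probOf x A = x_A = ∑_{a ∈ A} x_a`. -/
def probOf {α : Type} [Fintype α] (x : α → ℝ) (A : Finset α) : ℝ := ∑ a ∈ A, x a

/-- `x` is a lottery (probability distribution) on `α`. -/
def IsLottery {α : Type} [Fintype α] (x : α → ℝ) : Prop :=
  (∀ a, 0 ≤ x a) ∧ ∑ a, x a = 1

/-- `x` first order-stochastically dominates `y` at `R`. -/
def SD {α : Type} [Fintype α] (R : α → ℕ) (x y : α → ℝ) : Prop :=
  ∀ a : α, ∑ j ∈ Finset.univ.filter (fun j => R j ≤ R a), x j ≥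
           ∑ j ∈ Finset.univ.filter (fun j => R j ≤ R a), y j

/-- A rank function is canonical if its range is an initial segment of ℕ,
i.e. all indifference classes `M_1, …, M_K` are nonempty. -/
def Canonical {α : Type} (R : α → ℕ) : Prop :=
  ∀ a : α, ∀ k, k ≤ R a → ∃ b, R b = k

/-- Strategyproofness: for all preference orders `R, R'`, `φ(R)` first
order-stochastically dominates `φ(R')` at `R`. -/
def Strategyproof {α : Type} [Fintype α] (φ : (α → ℕ) → α → ℝ) : Prop :=
  ∀ R R' : α → ℕ, Canonical R → Canonical R' → SD R (φ R) (φ R')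

/-- `(R, R')` is a separation with split at index `κ`: `R'` splits the indifference
class `M_κ` of `R` into two nonempty parts `M_κ^1 = classOf R' κ` (preferred) and
`M_κ^2 = classOf R' (κ+1)`, all other classes unchanged (classes below `κ` keep their
rank, classes above `κ` are shifted by one). -/
def IsSeparation {α : Type} [Fintype α] (R R' : α → ℕ) (κ : ℕ) : Prop :=
  Canonical R ∧
  (∀ a, R a < κ → R' a = R a) ∧
  (∀ a, R a = κ → R' a = κ ∨ R' a = κ + 1) ∧
  (∀ a, κ < R a → R' a = R a + 1) ∧
  (∃ a, R a = κ ∧ R' a = κ) ∧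
  (∃ a, R a = κ ∧ R' a = κ + 1)

/-- Separation upper invariance: the probability of every class ranked above the
split class is unchanged. -/
def SepUpperInvariant {α : Type} [Fintype α] (φ : (α → ℕ) → α → ℝ) : Prop :=
  ∀ R R' κ, IsSeparation R R' κ →
    ∀ k < κ, probOf (φ R) (classOf R k) = probOf (φ R') (classOf R k)

/-- Separation lower invariance: the probability of every class ranked below the
split class is unchanged. -/
def SepLowerInvariant {α : Type} [Fintype α] (φ : (α → ℕ) → α → ℝ) : Prop :=
  ∀ R R' κ, IsSeparation R R' κ →
    ∀ k, κ < k → probOf (φ R) (classOf R k) = probOf (φ R') (classOf R k)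

/-- Separation responsiveness: `φ_{M_κ^1}(R') ≥ φ_{M_κ^1}(R)` and
`φ_{M_κ^2}(R') ≤ φ_{M_κ^2}(R)`. -/
def SepResponsive {α : Type} [Fintype α] (φ : (α → ℕ) → α → ℝ) : Prop :=
  ∀ R R' κ, IsSeparation R R' κ →
    probOf (φ R') (classOf R' κ) ≥ probOf (φ R) (classOf R' κ) ∧
    probOf (φ R') (classOf R' (κ + 1)) ≤ probOf (φ R) (classOf R' (κ + 1))

/-- Separation directness: if the probability of some class changes under a
separation, then both the probabilities of `M_κ^1` and of `M_κ^2` change. -/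
def SepDirect {α : Type} [Fintype α] (φ : (α → ℕ) → α → ℝ) : Prop :=
  ∀ R R' κ, IsSeparation R R' κ →
    (∃ k, probOf (φ R) (classOf R k) ≠ probOf (φ R') (classOf R k)) →
    probOf (φ R') (classOf R' κ) ≠ probOf (φ R) (classOf R' κ) ∧
    probOf (φ R') (classOf R' (κ + 1)) ≠ probOf (φ R) (classOf R' (κ + 1))


/-- If a mechanism is strategyproof, then it is separation upper invariant. -/
theorem sp_implies_sep_upper_invariant {α : Type} [Fintype α]
    (φ : (α → ℕ) → α → ℝ) (hlot : ∀ R, IsLottery (φ R))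
    (hsp : Strategyproof φ) :
    SepUpperInvariant φ := by
  intro R R' κ hsep k hk
  obtain ⟨hcanR, hlt, heq, hgt, ⟨a1, ha1, ha1'⟩, ⟨a2, ha2, ha2'⟩⟩ := hsep
  have hcanR' : Canonical R' := by
    intro a k hka
    rcases Nat.lt_or_ge k κ with h | h
    · obtain ⟨b, hb⟩ := hcanR a1 k (by omega)
      exact ⟨b, by rw [hlt b (by omega)]; exact hb⟩
    · rcases Nat.eq_or_lt_of_le h with h | h
      · exact ⟨a1, by omega⟩
      · rcases Nat.eq_or_lt_of_le h with h2 | h2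
        · exact ⟨a2, by omega⟩
        · have hRa : κ < R a := by
            rcases Nat.lt_trichotomy (R a) κ with h3 | h3 | h3
            · have := hlt a h3; omega
            · rcases heq a h3 with h4 | h4 <;> omega
            · exact h3
          have hRa' : R' a = R a + 1 := hgt a hRa
          obtain ⟨b, hb⟩ := hcanR a (k - 1) (by omega)
          have : κ < R b := by omega
          exact ⟨b, by rw [hgt b this]; omega⟩
  have hcum : ∀ n < κ, ∑ j ∈ Finset.univ.filter (fun j => R j ≤ n), φ R j
      = ∑ j ∈ Finset.univ.filter (fun j => R j ≤ n), φ R' j := by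
    intro n hn
    obtain ⟨b, hb⟩ := hcanR a1 n (by omega)
    have hb' : R' b = n := by rw [hlt b (by omega)]; exact hb
    have hset : Finset.univ.filter (fun j => R' j ≤ n)
        = Finset.univ.filter (fun j => R j ≤ n) := by
      ext j
      simp only [Finset.mem_filter, Finset.mem_univ, true_and]
      constructor
      · intro h
        rcases Nat.lt_trichotomy (R j) κ with h1 | h1 | h1
        · rw [hlt j h1] at h; exact h
        · rcases heq j h1 with h2 | h2 <;> omega
        · rw [hgt j h1] at h; omega
      · intro h; rw [hlt j (by omega)]; exact h
    have h1 := hsp R R' hcanR hcanR' b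
    have h2 := hsp R' R hcanR' hcanR b
    rw [hb] at h1
    rw [hb', hset] at h2
    linarith
  have hsplit : ∀ (x : α → ℝ) (n : ℕ),
      ∑ j ∈ Finset.univ.filter (fun j => R j ≤ n + 1), x j
        = ∑ j ∈ Finset.univ.filter (fun j => R j ≤ n), x j + probOf x (classOf R (n + 1)) := by
    intro x n
    unfold probOf classOf
    rw [← Finset.sum_filter_add_sum_filter_not
      (Finset.univ.filter (fun j => R j ≤ n + 1)) (fun j => R j ≤ n)]
    congr 1
    · congr 1; ext j; simp only [Finset.mem_filter, Finset.mem_univ, true_and]; omega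
    · congr 1; ext j; simp only [Finset.mem_filter, Finset.mem_univ, true_and]; omega
  cases k with
  | zero =>
      have h0 := hcum 0 hk
      have hset0 : classOf R 0 = Finset.univ.filter (fun j => R j ≤ 0) := by
        ext j
        simp only [classOf, Finset.mem_filter, Finset.mem_univ, true_and]
        omega
      unfold probOf
      rw [hset0]
      exact h0
  | succ n =>
      have h1 := hcum n (by omega)
      have h2 := hcum (n + 1) hk
      have e1 := hsplit (φ R) n
      have e2 := hsplit (φ R') n
      linarith
end

section
/- If a mechanism φ is strategyproof, then it is separation lower invariant: for every separation (R,R') with split at index κ, the probability φ assigns to each indifference class M_k for k > κ is the same under R and R'. -/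
open Finset

/-- If a mechanism is strategyproof, then it is separation lower invariant. -/
theorem sp_implies_sep_lower_invariant {α : Type} [Fintype α]
    (φ : (α → ℕ) → α → ℝ) (hlot : ∀ R, IsLottery (φ R))
    (hsp : Strategyproof φ) :
    SepLowerInvariant φ := by
  classical
  intro R R' κ hsep k hk
  obtain ⟨hcanR, hlt, heqk, hgt, ⟨a1, ha1, ha1'⟩, ⟨a2, ha2, ha2'⟩⟩ := hsep
  -- R' is canonical
  have hcanR' : Canonical R' := by
    intro a m hm
    rcases Nat.lt_or_ge m κ with h | h
    · obtain ⟨b, hb⟩ := hcanR a1 m (by omega)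
      exact ⟨b, by rw [hlt b (by omega)]; omega⟩
    rcases Nat.eq_or_lt_of_le h with h' | h'
    · exact ⟨a1, by omega⟩
    rcases Nat.eq_or_lt_of_le h' with h'' | h''
    · exact ⟨a2, by omega⟩
    -- m > κ + 1
    have hRa : κ < R a := by
      by_contra hc
      push_neg at hc
      rcases Nat.eq_or_lt_of_le hc with h1 | h1
      · rcases heqk a h1 with h2 | h2 <;> omega
      · have := hlt a h1; omega
    have : R' a = R a + 1 := hgt a hRa
    obtain ⟨b, hb⟩ := hcanR a (m - 1) (by omega)
    exact ⟨b, by rw [hgt b (by omega)]; omega⟩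
  -- key set equality: for t ≥ κ, {j : R' j ≤ t+1} = {j : R j ≤ t}
  have setEq : ∀ t, κ ≤ t →
      (Finset.univ.filter fun j => R' j ≤ t + 1) =
      (Finset.univ.filter fun j => R j ≤ t) := by
    intro t ht
    ext j
    simp only [Finset.mem_filter, Finset.mem_univ, true_and]
    rcases Nat.lt_trichotomy (R j) κ with h | h | h
    · have := hlt j h; omega
    · rcases heqk j h with h2 | h2 <;> omega
    · have := hgt j h; omega
  -- key: cumulative distributions agree at all thresholds t ≥ κ
  have key : ∀ t, κ ≤ t →
      ∑ j ∈ Finset.univ.filter (fun j => R j ≤ t), φ R j =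
      ∑ j ∈ Finset.univ.filter (fun j => R j ≤ t), φ R' j := by
    intro t ht
    by_cases hx : ∃ a, R a = t
    · obtain ⟨a, ha⟩ := hx
      have h1 := hsp R R' hcanR hcanR' a
      rw [ha] at h1
      -- find a' with R' a' = t + 1
      have hx' : ∃ a', R' a' = t + 1 := by
        rcases Nat.eq_or_lt_of_le ht with h | h
        · exact ⟨a2, by omega⟩
        · exact ⟨a, by rw [hgt a (by omega)]; omega⟩
      obtain ⟨a', ha'⟩ := hx'
      have h2 := hsp R' R hcanR' hcanR a'
      rw [ha', setEq t ht] at h2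
      linarith
    · -- no alternative of rank t: the filter is everything
      have hall : (Finset.univ.filter fun j => R j ≤ t) = Finset.univ := by
        ext j
        simp only [Finset.mem_filter, Finset.mem_univ, true_and, iff_true]
        by_contra hc
        push_neg at hc
        obtain ⟨b, hb⟩ := hcanR j t (by omega)
        exact hx ⟨b, hb⟩
      rw [hall, (hlot R).2, (hlot R').2]
  -- class k probability as difference of cumulatives
  have hk1 : 1 ≤ k := by omega
  have hsplit : ∀ x : α → ℝ,
      ∑ j ∈ Finset.univ.filter (fun j => R j ≤ k), x j =
      (∑ j ∈ Finset.univ.filter (fun j => R j ≤ k - 1), x j) + probOf x (classOf R k) := by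
    intro x
    have hu : (Finset.univ.filter fun j => R j ≤ k) =
        (Finset.univ.filter fun j => R j ≤ k - 1) ∪ classOf R k := by
      ext j
      simp only [classOf, Finset.mem_union, Finset.mem_filter, Finset.mem_univ, true_and]
      omega
    have hd : Disjoint (Finset.univ.filter fun j => R j ≤ k - 1) (classOf R k) := by
      simp only [Finset.disjoint_left, classOf, Finset.mem_filter, Finset.mem_univ, true_and]
      omega
    rw [hu, Finset.sum_union hd]
    rfl
  have e1 := key k (by omega)
  have e2 := key (k - 1) (by omega)
  have s1 := hsplit (φ R)
  have s2 := hsplit (φ R')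
  linarith
end

section
/- If a mechanism φ is strategyproof, then it is separation responsive: for every separation (R,R'), φ_{M_κ^1}(R') ≥ φ_{M_κ^1}(R) and φ_{M_κ^2}(R') ≤ φ_{M_κ^2}(R). -/
open Finset

/-- If a mechanism is strategyproof, then it is separation responsive. -/
theorem sp_implies_sep_responsive {α : Type} [Fintype α]
    (φ : (α → ℕ) → α → ℝ) (hlot : ∀ R, IsLottery (φ R))
    (hsp : Strategyproof φ) :
    SepResponsive φ := by
  classical
  intro R R' κ hsep
  obtain ⟨hcanR, hlt, heq, hgt, ⟨a1, ha1R, ha1R'⟩, ⟨a2, ha2R, ha2R'⟩⟩ := hsep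
  -- R' is canonical
  have hcanR' : Canonical R' := by
    intro a k hk
    rcases lt_trichotomy k κ with h | h | h
    · obtain ⟨b, hb⟩ := hcanR a1 k (by omega)
      exact ⟨b, by rw [hlt b (by omega)]; exact hb⟩
    · exact ⟨a1, by omega⟩
    · rcases Nat.lt_or_ge k (κ + 2) with h2 | h2
      · exact ⟨a2, by omega⟩
      · -- k ≥ κ + 2, so R a > κ
        have hRa : κ < R a := by
          rcases lt_trichotomy (R a) κ with h3 | h3 | h3
          · have := hlt a h3; omega
          · have := heq a h3; omega
          · exact h3
        have hR'a := hgt a hRa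
        obtain ⟨b, hb⟩ := hcanR a (k - 1) (by omega)
        have hbgt : κ < R b := by omega
        exact ⟨b, by rw [hgt b hbgt]; omega⟩
  -- set fact: {R' j ≤ κ} = {R j < κ} ⊔ {R' j = κ}
  have split1 : ∀ x : α → ℝ,
      ∑ j ∈ Finset.univ.filter (fun j => R' j ≤ κ), x j =
      ∑ j ∈ Finset.univ.filter (fun j => R j < κ), x j + probOf x (classOf R' κ) := by
    intro x
    rw [probOf, classOf, ← Finset.sum_union]
    · congr 1
      ext j
      simp only [Finset.mem_filter, Finset.mem_union, Finset.mem_univ, true_and]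
      constructor
      · intro h
        rcases lt_trichotomy (R j) κ with h' | h' | h'
        · exact Or.inl h'
        · have := heq j h'; omega
        · have := hgt j h'; omega
      · rintro (h | h)
        · rw [hlt j h]; omega
        · omega
    · rw [Finset.disjoint_left]
      intro j hj hj'
      simp only [Finset.mem_filter, Finset.mem_univ, true_and] at hj hj'
      have := hlt j hj; omega
  -- set fact: {R' j ≤ κ+1} = {R' j ≤ κ} ⊔ {R' j = κ+1}
  have split2 : ∀ x : α → ℝ,
      ∑ j ∈ Finset.univ.filter (fun j => R' j ≤ κ + 1), x j =
      ∑ j ∈ Finset.univ.filter (fun j => R' j ≤ κ), x j + probOf x (classOf R' (κ + 1)) := by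
    intro x
    rw [probOf, classOf, ← Finset.sum_union]
    · congr 1
      ext j
      simp only [Finset.mem_filter, Finset.mem_union, Finset.mem_univ, true_and]
      omega
    · rw [Finset.disjoint_left]
      intro j hj hj'
      simp only [Finset.mem_filter, Finset.mem_univ, true_and] at hj hj'
      omega
  -- set fact: {R' j ≤ κ+1} = {R j ≤ κ}
  have setEq1 : Finset.univ.filter (fun j => R' j ≤ κ + 1) =
      Finset.univ.filter (fun j => R j ≤ κ) := by
    ext j
    simp only [Finset.mem_filter, Finset.mem_univ, true_and]
    constructor
    · intro h
      rcases lt_trichotomy (R j) κ with h' | h' | h'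
      · omega
      · omega
      · have := hgt j h'; omega
    · intro h
      rcases lt_trichotomy (R j) κ with h' | h' | h'
      · have := hlt j h'; omega
      · have := heq j h'; omega
      · omega
  -- the sums below κ agree for φ R and φ R'
  have eqBelow : ∑ j ∈ Finset.univ.filter (fun j => R j < κ), φ R j =
      ∑ j ∈ Finset.univ.filter (fun j => R j < κ), φ R' j := by
    rcases Nat.eq_zero_or_pos κ with hκ | hκ
    · subst hκ
      simp
    · obtain ⟨m, hm⟩ := Nat.exists_eq_add_of_lt hκ
      have hm' : κ = m + 1 := by omega
      obtain ⟨b, hb⟩ := hcanR a1 m (by omega)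
      have hbR' : R' b = m := by rw [hlt b (by omega)]; exact hb
      have hsetR : Finset.univ.filter (fun j => R j ≤ R b) =
          Finset.univ.filter (fun j => R j < κ) := by
        ext j
        simp only [Finset.mem_filter, Finset.mem_univ, true_and]
        omega
      have hsetR' : Finset.univ.filter (fun j => R' j ≤ R' b) =
          Finset.univ.filter (fun j => R j < κ) := by
        ext j
        simp only [Finset.mem_filter, Finset.mem_univ, true_and]
        rw [hbR']
        constructor
        · intro h
          rcases lt_trichotomy (R j) κ with h' | h' | h'
          · exact h'
          · have := heq j h'; omega
          · have := hgt j h'; omega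
        · intro h
          rw [hlt j h]; omega
      have h1 := hsp R R' hcanR hcanR' b
      have h2 := hsp R' R hcanR' hcanR b
      rw [hsetR] at h1
      rw [hsetR'] at h2
      linarith
  -- SD inequalities at rank κ
  have hseta1 : Finset.univ.filter (fun j => R j ≤ R a1) =
      Finset.univ.filter (fun j => R j ≤ κ) := by rw [ha1R]
  have hseta1' : Finset.univ.filter (fun j => R' j ≤ R' a1) =
      Finset.univ.filter (fun j => R' j ≤ κ) := by rw [ha1R']
  have E1 := hsp R R' hcanR hcanR' a1
  have E2 := hsp R' R hcanR' hcanR a1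
  rw [hseta1] at E1
  rw [hseta1'] at E2
  have key2 := split2 (φ R)
  have key2' := split2 (φ R')
  rw [setEq1] at key2 key2'
  have key1 := split1 (φ R)
  have key1' := split1 (φ R')
  constructor
  · linarith
  · linarith
end

section
/- If a mechanism φ is separation responsive, separation upper invariant, and separation lower invariant, then it is separation strategyproof: for every separation (R,R'), φ(R) first order-stochastically dominates φ(R') at R, and φ(R') first order-stochastically dominates φ(R) at R'. -/
open Finset

/- Every upper contour set of `R` is a union of whole classes of `R`, and so is
its complement; one of the two consists only of classes other than the split class `M_κ`,
whose probabilities are invariant, so `φ(R)` and `φ(R')` agree on every upper contour set of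
`R`. The upper contour sets of `R'` are those of `R` as well, except `M_1 ∪ … ∪ M_{κ-1} ∪ M_κ^1`,
on which responsiveness gives the required inequality. -/

theorem sum_filter_eq_of_sum_filter_not_eq {α : Type*} {s : Finset α} {p : α → Prop}
    [DecidablePred p] {x y : α → ℝ} (htot : ∑ j ∈ s, x j = ∑ j ∈ s, y j)
    (h : ∑ j ∈ s.filter (fun j => ¬ p j), x j = ∑ j ∈ s.filter (fun j => ¬ p j), y j) :
    ∑ j ∈ s.filter p, x j = ∑ j ∈ s.filter p, y j := by
  have hx := sum_filter_add_sum_filter_not s p x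
  have hy := sum_filter_add_sum_filter_not s p y
  linarith

section RankFilters

variable {α : Type} [Fintype α]

theorem sum_filter_rank_eq_sum_probOf_classOf (R : α → ℕ) (x : α → ℝ) (p : ℕ → Prop)
    [DecidablePred p] :
    ∑ j ∈ univ.filter (fun j => p (R j)), x j
      = ∑ k ∈ (univ.image R).filter p, probOf x (classOf R k) := by
  rw [← sum_fiberwise_of_maps_to (g := R) (t := (univ.image R).filter p)
    (fun j hj => by simpa using hj)]
  refine sum_congr rfl fun k hk => sum_congr ?_ fun _ _ => rfl
  ext j
  simp only [classOf, mem_filter, mem_univ, true_and, and_iff_right_iff_imp]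
  rintro rfl
  exact (mem_filter.1 hk).2

theorem sum_filter_rank_eq_of_probOf_classOf_eq {R : α → ℕ} {x y : α → ℝ} (p : ℕ → Prop)
    [DecidablePred p] (h : ∀ k, p k → probOf x (classOf R k) = probOf y (classOf R k)) :
    ∑ j ∈ univ.filter (fun j => p (R j)), x j = ∑ j ∈ univ.filter (fun j => p (R j)), y j := by
  rw [sum_filter_rank_eq_sum_probOf_classOf, sum_filter_rank_eq_sum_probOf_classOf]
  exact sum_congr rfl fun k hk => h k (mem_filter.1 hk).2

theorem sum_rank_le_eq_of_probOf_classOf_eq {R : α → ℕ} {x y : α → ℝ} {κ : ℕ}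
    (htot : ∑ j, x j = ∑ j, y j)
    (h : ∀ k, k ≠ κ → probOf x (classOf R k) = probOf y (classOf R k)) (n : ℕ) :
    ∑ j ∈ univ.filter (fun j => R j ≤ n), x j = ∑ j ∈ univ.filter (fun j => R j ≤ n), y j := by
  rcases lt_or_ge n κ with hn | hn
  · exact sum_filter_rank_eq_of_probOf_classOf_eq (· ≤ n) fun k hk => h k (by omega)
  · refine sum_filter_eq_of_sum_filter_not_eq htot ?_
    exact sum_filter_rank_eq_of_probOf_classOf_eq (fun k => ¬ k ≤ n) fun k hk => h k (by omega)

theorem sum_rank_le_eq_sum_rank_lt_add_probOf (R : α → ℕ) (x : α → ℝ) (n : ℕ) :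
    ∑ j ∈ univ.filter (fun j => R j ≤ n), x j
      = ∑ j ∈ univ.filter (fun j => R j < n), x j + probOf x (classOf R n) := by
  rw [← sum_filter_add_sum_filter_not (univ.filter fun j => R j ≤ n) (fun j => R j < n),
    filter_filter, filter_filter, probOf, classOf]
  congr 2 <;> ext j <;> simp only [mem_filter, mem_univ, true_and] <;> omega

end RankFilters

namespace IsSeparation

variable {α : Type} [Fintype α] {R R' : α → ℕ} {κ : ℕ}

theorem rank_cases (hsep : IsSeparation R R' κ) (j : α) :
    (R j < κ ∧ R' j = R j) ∨ (R j = κ ∧ (R' j = κ ∨ R' j = κ + 1)) ∨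
      (κ < R j ∧ R' j = R j + 1) := by
  obtain ⟨-, hlt, heq, hgt, -, -⟩ := hsep
  rcases lt_trichotomy (R j) κ with h | h | h
  exacts [Or.inl ⟨h, hlt j h⟩, Or.inr (Or.inl ⟨h, heq j h⟩), Or.inr (Or.inr ⟨h, hgt j h⟩)]

theorem filter_rank_le_of_lt (hsep : IsSeparation R R' κ) {n : ℕ} (hn : n < κ) :
    univ.filter (fun j => R' j ≤ n) = univ.filter (fun j => R j ≤ n) := by
  ext j
  simp only [mem_filter, mem_univ, true_and]
  rcases hsep.rank_cases j with h | h | h <;> omega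

theorem filter_rank_lt (hsep : IsSeparation R R' κ) :
    univ.filter (fun j => R' j < κ) = univ.filter (fun j => R j < κ) := by
  ext j
  simp only [mem_filter, mem_univ, true_and]
  rcases hsep.rank_cases j with h | h | h <;> omega

theorem filter_rank_le_succ_of_le (hsep : IsSeparation R R' κ) {n : ℕ} (hn : κ ≤ n) :
    univ.filter (fun j => R' j ≤ n + 1) = univ.filter (fun j => R j ≤ n) := by
  ext j
  simp only [mem_filter, mem_univ, true_and]
  rcases hsep.rank_cases j with h | h | h <;> omega

theorem sum_rank_le_split_le {x y : α → ℝ} (hsep : IsSeparation R R' κ)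
    (hup : ∀ k < κ, probOf x (classOf R k) = probOf y (classOf R k))
    (hresp : probOf x (classOf R' κ) ≤ probOf y (classOf R' κ)) :
    ∑ j ∈ univ.filter (fun j => R' j ≤ κ), x j ≤ ∑ j ∈ univ.filter (fun j => R' j ≤ κ), y j := by
  have hstrict : ∑ j ∈ univ.filter (fun j => R' j < κ), x j
      = ∑ j ∈ univ.filter (fun j => R' j < κ), y j := by
    rw [hsep.filter_rank_lt]
    exact sum_filter_rank_eq_of_probOf_classOf_eq (· < κ) hup
  rw [sum_rank_le_eq_sum_rank_lt_add_probOf, sum_rank_le_eq_sum_rank_lt_add_probOf, hstrict]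
  linarith

end IsSeparation

/-- If a mechanism is separation responsive, separation upper invariant and
separation lower invariant, then it is separation strategyproof. -/
theorem axioms_imply_separation_sp {α : Type} [Fintype α]
    (φ : (α → ℕ) → α → ℝ) (hlot : ∀ R, IsLottery (φ R))
    (hresp : SepResponsive φ)
    (hupper : SepUpperInvariant φ) (hlower : SepLowerInvariant φ) :
    ∀ R R' κ, IsSeparation R R' κ →
      SD R (φ R) (φ R') ∧ SD R' (φ R') (φ R) := by
  intro R R' κ hsep
  have hup := hupper R R' κ hsep
  have hcontour : ∀ n, ∑ j ∈ univ.filter (fun j => R j ≤ n), φ R j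
      = ∑ j ∈ univ.filter (fun j => R j ≤ n), φ R' j := by
    refine sum_rank_le_eq_of_probOf_classOf_eq (κ := κ) ((hlot R).2.trans (hlot R').2.symm)
      fun k hk => ?_
    rcases hk.lt_or_gt with hk | hk
    exacts [hup k hk, hlower R R' κ hsep k hk]
  refine ⟨fun a => (hcontour (R a)).ge, fun a => ?_⟩
  rcases lt_trichotomy (R' a) κ with ha | ha | ha
  · rw [hsep.filter_rank_le_of_lt ha]
    exact (hcontour _).le
  · rw [ha]
    exact hsep.sum_rank_le_split_le hup (hresp R R' κ hsep).1
  · obtain ⟨n, hn⟩ := Nat.exists_eq_add_of_lt ha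
    rw [hn, hsep.filter_rank_le_succ_of_le (Nat.le_add_right κ n)]
    exact (hcontour _).le
end

section
/- A deterministic mechanism φ is strategyproof if and only if it is separation monotonic (i.e., separation responsive and separation direct). -/
open Finset

section Aux

open scoped Classical
set_option linter.unusedSectionVars false

variable {α : Type} [Fintype α]

private lemma sum_det (φ : (α → ℕ) → α → ℝ) (f : (α → ℕ) → α)
    (hφ : ∀ R, φ R (f R) = 1 ∧ ∀ b, b ≠ f R → φ R b = 0) (V : α → ℕ) (s : Finset α) :
    ∑ j ∈ s, φ V j = if f V ∈ s then 1 else 0 := by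
  classical
  have h : ∀ j, φ V j = if j = f V then 1 else 0 := by
    intro j
    by_cases hj : j = f V
    · subst hj; simp [(hφ V).1]
    · simp [hj, (hφ V).2 j hj]
  calc ∑ j ∈ s, φ V j = ∑ j ∈ s, if j = f V then (1:ℝ) else 0 :=
        Finset.sum_congr rfl (fun j _ => h j)
    _ = if f V ∈ s then 1 else 0 := Finset.sum_ite_eq' s (f V) (fun _ => (1:ℝ))

private lemma probOf_det (φ : (α → ℕ) → α → ℝ) (f : (α → ℕ) → α)
    (hφ : ∀ R, φ R (f R) = 1 ∧ ∀ b, b ≠ f R → φ R b = 0) (V W : α → ℕ) (m : ℕ) :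
    probOf (φ V) (classOf W m) = if W (f V) = m then 1 else 0 := by
  classical
  unfold probOf classOf
  rw [sum_det φ f hφ]
  simp

private lemma SD_det (φ : (α → ℕ) → α → ℝ) (f : (α → ℕ) → α)
    (hφ : ∀ R, φ R (f R) = 1 ∧ ∀ b, b ≠ f R → φ R b = 0) (W V V' : α → ℕ) :
    SD W (φ V) (φ V') ↔ W (f V) ≤ W (f V') := by
  classical
  constructor
  · intro h
    have h2 := h (f V')
    rw [sum_det φ f hφ, sum_det φ f hφ] at h2
    simp only [Finset.mem_filter, Finset.mem_univ, true_and] at h2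
    by_cases hle : W (f V) ≤ W (f V')
    · exact hle
    · exfalso
      rw [if_neg hle, if_pos le_rfl] at h2
      linarith
  · intro hle a
    rw [sum_det φ f hφ, sum_det φ f hφ]
    simp only [Finset.mem_filter, Finset.mem_univ, true_and]
    by_cases h2 : W (f V') ≤ W a
    · rw [if_pos h2, if_pos (le_trans hle h2)]
    · rw [if_neg h2]
      split_ifs <;> norm_num

private lemma sep_pos {U V : α → ℕ} {κ : ℕ} (hsep : IsSeparation U V κ) (a : α) :
    (U a < κ ∧ V a = U a) ∨ (U a = κ ∧ (V a = κ ∨ V a = κ + 1)) ∨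
      (κ < U a ∧ V a = U a + 1) := by
  obtain ⟨-, hlt, heq, hgt, -, -⟩ := hsep
  rcases lt_trichotomy (U a) κ with h | h | h
  · exact Or.inl ⟨h, hlt a h⟩
  · exact Or.inr (Or.inl ⟨h, heq a h⟩)
  · exact Or.inr (Or.inr ⟨h, hgt a h⟩)

private lemma sep_refines {U V : α → ℕ} {κ : ℕ} (hsep : IsSeparation U V κ)
    {a b : α} (hab : U a < U b) : V a < V b := by
  have h1 := sep_pos hsep a
  have h2 := sep_pos hsep b
  omega

private lemma sep_class_eq {U V : α → ℕ} {κ : ℕ} (hsep : IsSeparation U V κ)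
    {a b : α} (hab : V a = V b) : U a = U b := by
  have h1 := sep_pos hsep a
  have h2 := sep_pos hsep b
  omega

private lemma sep_canonical {U V : α → ℕ} {κ : ℕ} (hsep : IsSeparation U V κ) :
    Canonical V := by
  obtain ⟨hU, hlt, heq, hgt, ⟨w1, hw11, hw12⟩, ⟨w2, hw21, hw22⟩⟩ := hsep
  intro a k hk
  have hpa : (U a < κ ∧ V a = U a) ∨ (U a = κ ∧ (V a = κ ∨ V a = κ + 1)) ∨
      (κ < U a ∧ V a = U a + 1) := by
    rcases lt_trichotomy (U a) κ with h | h | h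
    · exact Or.inl ⟨h, hlt a h⟩
    · exact Or.inr (Or.inl ⟨h, heq a h⟩)
    · exact Or.inr (Or.inr ⟨h, hgt a h⟩)
  rcases lt_trichotomy k κ with h | h | h
  · obtain ⟨b, hb⟩ := hU a k (by omega)
    exact ⟨b, by rw [hlt b (by omega)]; exact hb⟩
  · exact ⟨w1, by omega⟩
  · rcases Nat.eq_or_lt_of_le h with h' | h'
    · exact ⟨w2, by omega⟩
    · have hUa : κ < U a ∧ V a = U a + 1 := by omega
      obtain ⟨b, hb⟩ := hU a (k - 1) (by omega)
      refine ⟨b, ?_⟩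
      rw [hgt b (by omega)]
      omega

private lemma canonical_lt_card {V : α → ℕ} (hV : Canonical V) (x : α) :
    V x < Fintype.card α := by
  classical
  have hw : ∀ k : ℕ, ∃ b, k ≤ V x → V b = k := by
    intro k
    by_cases h : k ≤ V x
    · obtain ⟨b, hb⟩ := hV x k h
      exact ⟨b, fun _ => hb⟩
    · exact ⟨x, fun h' => absurd h' h⟩
  choose w hw' using hw
  have hcard : (Finset.range (V x + 1)).card ≤ (Finset.univ : Finset α).card := by
    apply Finset.card_le_card_of_injOn w (fun _ _ => Finset.mem_univ _)
    intro k1 h1 k2 h2 he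
    simp only [Finset.coe_range, Set.mem_Iio] at h1 h2
    have e1 := hw' k1 (by omega)
    have e2 := hw' k2 (by omega)
    rw [he] at e1
    omega
  simpa using hcard

private lemma ruleA {φ : (α → ℕ) → α → ℝ} {f : (α → ℕ) → α}
    (hφ : ∀ R, φ R (f R) = 1 ∧ ∀ b, b ≠ f R → φ R b = 0)
    (hresp : SepResponsive φ) (hdir : SepDirect φ)
    {U V : α → ℕ} {κ : ℕ} (hsep : IsSeparation U V κ) : U (f U) = U (f V) := by
  by_contra hne
  have hprem : ∃ k, probOf (φ U) (classOf U k) ≠ probOf (φ V) (classOf U k) := by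
    refine ⟨U (f U), ?_⟩
    rw [probOf_det φ f hφ, probOf_det φ f hφ, if_pos rfl, if_neg (fun h => hne h.symm)]
    norm_num
  obtain ⟨hd1, hd2⟩ := hdir U V κ hsep hprem
  obtain ⟨hr1, hr2⟩ := hresp U V κ hsep
  rw [probOf_det φ f hφ, probOf_det φ f hφ] at hd1 hd2 hr1 hr2
  have hA : V (f V) = κ ∧ ¬ V (f U) = κ := by
    by_cases h1 : V (f V) = κ <;> by_cases h2 : V (f U) = κ
    · simp [h1, h2] at hd1
    · exact ⟨h1, h2⟩
    · rw [if_neg h1, if_pos h2] at hr1; norm_num at hr1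
    · simp [h1, h2] at hd1
  have hB : V (f U) = κ + 1 ∧ ¬ V (f V) = κ + 1 := by
    by_cases h1 : V (f V) = κ + 1 <;> by_cases h2 : V (f U) = κ + 1
    · simp [h1, h2] at hd2
    · rw [if_pos h1, if_neg h2] at hr2; norm_num at hr2
    · exact ⟨h2, h1⟩
    · simp [h1, h2] at hd2
  have hp1 := sep_pos hsep (f U)
  have hp2 := sep_pos hsep (f V)
  omega

private lemma rulei {φ : (α → ℕ) → α → ℝ} {f : (α → ℕ) → α}
    (hφ : ∀ R, φ R (f R) = 1 ∧ ∀ b, b ≠ f R → φ R b = 0)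
    (hresp : SepResponsive φ)
    {U V : α → ℕ} {κ : ℕ} (hsep : IsSeparation U V κ) (h : V (f U) = κ) :
    V (f V) = κ := by
  have hr1 := (hresp U V κ hsep).1
  rw [probOf_det φ f hφ, probOf_det φ f hφ, if_pos h] at hr1
  by_cases h2 : V (f V) = κ
  · exact h2
  · rw [if_neg h2] at hr1; norm_num at hr1

private lemma ruleii {φ : (α → ℕ) → α → ℝ} {f : (α → ℕ) → α}
    (hφ : ∀ R, φ R (f R) = 1 ∧ ∀ b, b ≠ f R → φ R b = 0)
    (hresp : SepResponsive φ)
    {U V : α → ℕ} {κ : ℕ} (hsep : IsSeparation U V κ) (h : V (f V) = κ + 1) :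
    V (f U) = κ + 1 := by
  have hr2 := (hresp U V κ hsep).2
  rw [probOf_det φ f hφ, probOf_det φ f hφ, if_pos h] at hr2
  by_cases h2 : V (f U) = κ + 1
  · exact h2
  · rw [if_neg h2] at hr2; norm_num at hr2

private noncomputable def splitO (U : α → ℕ) (κ : ℕ) (s : Finset α) : α → ℕ := fun x =>
  if U x < κ then U x else if κ < U x then U x + 1 else if x ∈ s then κ else κ + 1

private lemma splitO_lt {U : α → ℕ} {κ : ℕ} {s : Finset α} {a : α} (h : U a < κ) :
    splitO U κ s a = U a := by simp [splitO, h]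

private lemma splitO_gt {U : α → ℕ} {κ : ℕ} {s : Finset α} {a : α} (h : κ < U a) :
    splitO U κ s a = U a + 1 := by
  unfold splitO
  rw [if_neg (by omega), if_pos h]

private lemma splitO_mem {U : α → ℕ} {κ : ℕ} {s : Finset α} {a : α} (h : U a = κ)
    (hm : a ∈ s) : splitO U κ s a = κ := by
  unfold splitO
  rw [if_neg (by omega), if_neg (by omega), if_pos hm]

private lemma splitO_nmem {U : α → ℕ} {κ : ℕ} {s : Finset α} {a : α} (h : U a = κ)
    (hm : a ∉ s) : splitO U κ s a = κ + 1 := by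
  unfold splitO
  rw [if_neg (by omega), if_neg (by omega), if_neg hm]

private lemma splitO_isSep {U : α → ℕ} {κ : ℕ} {s : Finset α} (hU : Canonical U)
    (h1 : ∃ z, U z = κ ∧ z ∈ s) (h2 : ∃ z, U z = κ ∧ z ∉ s) :
    IsSeparation U (splitO U κ s) κ := by
  refine ⟨hU, fun a ha => splitO_lt ha, ?_, fun a ha => splitO_gt ha, ?_, ?_⟩
  · intro a ha
    by_cases hm : a ∈ s
    · exact Or.inl (splitO_mem ha hm)
    · exact Or.inr (splitO_nmem ha hm)
  · obtain ⟨z, hz, hzs⟩ := h1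
    exact ⟨z, hz, splitO_mem hz hzs⟩
  · obtain ⟨z, hz, hzs⟩ := h2
    exact ⟨z, hz, splitO_nmem hz hzs⟩

private lemma no_split_eq {U T : α → ℕ} (hU : Canonical U) (hT : Canonical T)
    (href : ∀ x y, U x < U y → T x < T y) (hns : ∀ x y, U x = U y → T x = T y) :
    U = T := by
  have key : ∀ k x, U x = k → T x = k := by
    intro k
    induction k using Nat.strong_induction_on with
    | _ k ihk =>
      intro x hx
      have h1 : k ≤ T x := by
        by_contra hcon
        push_neg at hcon
        obtain ⟨y, hy⟩ := hU x (T x) (by omega)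
        have hTy : T y = T x := ihk (T x) (by omega) y hy
        have : T y < T x := href y x (by omega)
        omega
      rcases Nat.eq_or_lt_of_le h1 with h | h
      · omega
      · exfalso
        obtain ⟨z, hz⟩ := hT x k (by omega)
        rcases lt_trichotomy (U z) k with hzk | hzk | hzk
        · have := ihk (U z) hzk z rfl; omega
        · have := hns z x (by omega); omega
        · have := href x z (by omega); omega
  funext x
  exact (key (U x) x rfl).symm

private lemma refine_rank_aux {φ : (α → ℕ) → α → ℝ} {f : (α → ℕ) → α}
    (hφ : ∀ R, φ R (f R) = 1 ∧ ∀ b, b ≠ f R → φ R b = 0)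
    (hresp : SepResponsive φ) (hdir : SepDirect φ) :
    ∀ (n : ℕ) (U T : α → ℕ), Canonical U → Canonical T →
      (∀ x y, U x < U y → T x < T y) →
      Fintype.card α * Fintype.card α ≤ n + ∑ a, U a →
      U (f T) = U (f U) := by
  intro n
  induction n with
  | zero =>
    intro U T hU hT href hn
    exfalso
    have hpos : 0 < Fintype.card α := @Fintype.card_pos α _ ⟨f T⟩
    have hsum : ∑ a, (U a + 1) ≤ Fintype.card α * Fintype.card α := by
      calc ∑ a, (U a + 1) ≤ ∑ _a : α, Fintype.card α :=
            Finset.sum_le_sum (fun a _ => by have := canonical_lt_card hU a; omega)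
        _ = Fintype.card α * Fintype.card α := by
            rw [Finset.sum_const, smul_eq_mul, Finset.card_univ]
    rw [Finset.sum_add_distrib, Finset.sum_const, smul_eq_mul, mul_one,
      Finset.card_univ] at hsum
    omega
  | succ n ih =>
    intro U T hU hT href hn
    by_cases hsplit : ∃ x y, U x = U y ∧ T x ≠ T y
    · obtain ⟨x, y, hxy, hTxy⟩ := hsplit
      set κ := U x with hκdef
      obtain ⟨z₀, hz₀κ, hz₀min⟩ : ∃ z, U z = κ ∧ ∀ w, U w = κ → T z ≤ T w := by
        obtain ⟨z, hz, hzmin⟩ := Finset.exists_min_image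
          (Finset.univ.filter (fun w => U w = κ)) T ⟨x, by simp [hκdef]⟩
        refine ⟨z, by simpa using hz, fun w hw => hzmin w (by simp [hw])⟩
      set s : Finset α := Finset.univ.filter (fun z => T z = T z₀) with hsdef
      have hsmem : ∀ a, a ∈ s ↔ T a = T z₀ := by
        intro a; rw [hsdef]; simp
      have h1 : ∃ z, U z = κ ∧ z ∈ s := ⟨z₀, hz₀κ, (hsmem z₀).mpr rfl⟩
      have h2 : ∃ z, U z = κ ∧ z ∉ s := by
        by_cases hxt : T x = T z₀
        · refine ⟨y, by omega, ?_⟩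
          rw [hsmem]; omega
        · refine ⟨x, by omega, ?_⟩
          rw [hsmem]; exact hxt
      have hsep : IsSeparation U (splitO U κ s) κ := splitO_isSep hU h1 h2
      have hU' : Canonical (splitO U κ s) := sep_canonical hsep
      have href' : ∀ a b, splitO U κ s a < splitO U κ s b → T a < T b := by
        intro a b hab
        rcases lt_trichotomy (U a) κ with ha | ha | ha <;>
          rcases lt_trichotomy (U b) κ with hb | hb | hb
        · rw [splitO_lt ha, splitO_lt hb] at hab
          exact href a b hab
        · exact href a b (by omega)
        · exact href a b (by omega)
        · by_cases has : a ∈ s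
          · rw [splitO_mem ha has, splitO_lt hb] at hab; omega
          · rw [splitO_nmem ha has, splitO_lt hb] at hab; omega
        · by_cases has : a ∈ s <;> by_cases hbs : b ∈ s
          · rw [splitO_mem ha has, splitO_mem hb hbs] at hab; omega
          · have hta : T a = T z₀ := (hsmem a).mp has
            have htb : ¬ T b = T z₀ := fun hh => hbs ((hsmem b).mpr hh)
            have := hz₀min b hb
            omega
          · rw [splitO_nmem ha has, splitO_mem hb hbs] at hab; omega
          · rw [splitO_nmem ha has, splitO_nmem hb hbs] at hab; omega
        · exact href a b (by omega)
        · rw [splitO_gt ha, splitO_lt hb] at hab; omega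
        · by_cases hbs : b ∈ s
          · rw [splitO_gt ha, splitO_mem hb hbs] at hab; omega
          · rw [splitO_gt ha, splitO_nmem hb hbs] at hab; omega
        · rw [splitO_gt ha, splitO_gt hb] at hab
          exact href a b (by omega)
      have hmono : ∀ a, U a ≤ splitO U κ s a := by
        intro a
        rcases lt_trichotomy (U a) κ with ha | ha | ha
        · rw [splitO_lt ha]
        · by_cases has : a ∈ s
          · rw [splitO_mem ha has]; omega
          · rw [splitO_nmem ha has]; omega
        · rw [splitO_gt ha]; omega
      have hstrict : ∑ a, U a < ∑ a, splitO U κ s a := by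
        obtain ⟨w, hw1, hw2⟩ := h2
        refine Finset.sum_lt_sum (fun a _ => hmono a) ⟨w, Finset.mem_univ w, ?_⟩
        rw [splitO_nmem hw1 hw2]
        omega
      have hrec := ih (splitO U κ s) T hU' hT href' (by omega)
      have hA := ruleA hφ hresp hdir hsep
      have hcls2 := sep_class_eq hsep hrec
      omega
    · push_neg at hsplit
      rw [no_split_eq hU hT href hsplit]

private lemma refine_rank {φ : (α → ℕ) → α → ℝ} {f : (α → ℕ) → α}
    (hφ : ∀ R, φ R (f R) = 1 ∧ ∀ b, b ≠ f R → φ R b = 0)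
    (hresp : SepResponsive φ) (hdir : SepDirect φ)
    {U T : α → ℕ} (hU : Canonical U) (hT : Canonical T)
    (href : ∀ x y, U x < U y → T x < T y) :
    U (f T) = U (f U) :=
  refine_rank_aux hφ hresp hdir (Fintype.card α * Fintype.card α) U T hU hT href
    (Nat.le_add_right _ _)


private noncomputable def twoC (p : α → Prop) : α → ℕ := fun x => if p x then 0 else 1

private noncomputable def threeC (p q : α → Prop) : α → ℕ := fun x =>
  if p x then 0 else if q x then 1 else 2

private lemma twoC_pos {p : α → Prop} {x : α} (h : p x) : twoC p x = 0 := by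
  simp [twoC, h]

private lemma twoC_neg {p : α → Prop} {x : α} (h : ¬ p x) : twoC p x = 1 := by
  simp [twoC, h]

private lemma twoC_zero {p : α → Prop} {x : α} (h : twoC p x = 0) : p x := by
  by_cases hp : p x
  · exact hp
  · rw [twoC_neg hp] at h; omega

private lemma twoC_one {p : α → Prop} {x : α} (h : twoC p x = 1) : ¬ p x := by
  by_cases hp : p x
  · rw [twoC_pos hp] at h; omega
  · exact hp

private lemma twoC_le (p : α → Prop) (x : α) : twoC p x ≤ 1 := by
  unfold twoC; split_ifs <;> omega

private lemma twoC_lt {p : α → Prop} {a b : α} (h : twoC p a < twoC p b) :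
    p a ∧ ¬ p b := by
  unfold twoC at h
  split_ifs at h <;> first | omega | (refine ⟨?_, ?_⟩ <;> assumption)

private lemma threeC_v0 {p q : α → Prop} {x : α} (h : p x) : threeC p q x = 0 := by
  simp [threeC, h]

private lemma threeC_v1 {p q : α → Prop} {x : α} (h1 : ¬ p x) (h2 : q x) :
    threeC p q x = 1 := by simp [threeC, h1, h2]

private lemma threeC_v2 {p q : α → Prop} {x : α} (h1 : ¬ p x) (h2 : ¬ q x) :
    threeC p q x = 2 := by simp [threeC, h1, h2]

private lemma threeC_at0 {p q : α → Prop} {x : α} (h : threeC p q x = 0) : p x := by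
  unfold threeC at h
  split_ifs at h <;> first | omega | assumption

private lemma threeC_at1 {p q : α → Prop} {x : α} (h : threeC p q x = 1) :
    ¬ p x ∧ q x := by
  unfold threeC at h
  split_ifs at h <;> first | omega | (refine ⟨?_, ?_⟩ <;> assumption)

private lemma threeC_at2 {p q : α → Prop} {x : α} (h : threeC p q x = 2) :
    ¬ p x ∧ ¬ q x := by
  unfold threeC at h
  split_ifs at h <;> first | omega | (refine ⟨?_, ?_⟩ <;> assumption)

private lemma threeC_le (p q : α → Prop) (x : α) : threeC p q x ≤ 2 := by
  unfold threeC; split_ifs <;> omega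

private lemma twoC_canonical {p : α → Prop} (h0 : ∃ x, p x) : Canonical (twoC p) := by
  intro a m hm
  have hub : m ≤ 1 := le_trans hm (twoC_le p a)
  interval_cases m
  · obtain ⟨w, hw⟩ := h0
    exact ⟨w, twoC_pos hw⟩
  · refine ⟨a, ?_⟩
    have := twoC_le p a
    omega

private lemma threeC_canonical {p q : α → Prop} (h0 : ∃ x, p x)
    (h1 : ∃ x, ¬ p x ∧ q x) : Canonical (threeC p q) := by
  intro a m hm
  have hub : m ≤ 2 := le_trans hm (threeC_le p q a)
  interval_cases m
  · obtain ⟨w, hw⟩ := h0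
    exact ⟨w, threeC_v0 hw⟩
  · obtain ⟨w, hw1, hw2⟩ := h1
    exact ⟨w, threeC_v1 hw1 hw2⟩
  · refine ⟨a, ?_⟩
    have := threeC_le p q a
    omega

private lemma topize {φ : (α → ℕ) → α → ℝ} {f : (α → ℕ) → α}
    (hφ : ∀ R, φ R (f R) = 1 ∧ ∀ b, b ≠ f R → φ R b = 0)
    (hresp : SepResponsive φ) (hdir : SepDirect φ)
    (V : α → ℕ) (k : ℕ) (hV : Canonical V) (hk : V (f V) = k) :
    V (f (twoC (fun x => V x = k))) = k := by
  have hUcan : Canonical (twoC (fun x => V x = k)) := twoC_canonical ⟨f V, hk⟩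
  rcases Nat.eq_zero_or_pos k with rfl | hkpos
  · -- k = 0 : direct refinement argument
    have href : ∀ a b, twoC (fun x => V x = 0) a < twoC (fun x => V x = 0) b →
        V a < V b := by
      intro a b h
      obtain ⟨h1, h2⟩ := twoC_lt h
      omega
    have hQ := refine_rank hφ hresp hdir hUcan hV href
    have h1 : twoC (fun x => V x = 0) (f V) = 0 := twoC_pos hk
    have h2 : twoC (fun x => V x = 0) (f (twoC (fun x => V x = 0))) = 0 := by omega
    exact twoC_zero (p := fun x => V x = 0) h2
  · -- k ≥ 1
    obtain ⟨d, hd⟩ := hV (f V) (k - 1) (by omega)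
    have hdlt : V d < k := by omega
    have hWcan : Canonical (twoC (fun x => V x ≤ k)) := twoC_canonical ⟨f V, by omega⟩
    have hZcan : Canonical (threeC (fun x => V x < k) (fun x => V x = k)) :=
      threeC_canonical ⟨d, hdlt⟩ ⟨f V, by omega, hk⟩
    have hXcan : Canonical (threeC (fun x => V x = k) (fun x => V x < k)) :=
      threeC_canonical ⟨f V, hk⟩ ⟨d, by omega, hdlt⟩
    have hrefZ : ∀ a b, threeC (fun x => V x < k) (fun x => V x = k) a <
        threeC (fun x => V x < k) (fun x => V x = k) b → V a < V b := by
      intro a b h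
      unfold threeC at h
      split_ifs at h <;> omega
    have h1 := refine_rank hφ hresp hdir hZcan hV hrefZ
    have hZfV : threeC (fun x => V x < k) (fun x => V x = k) (f V) = 1 :=
      threeC_v1 (by omega) hk
    have hZZ : threeC (fun x => V x < k) (fun x => V x = k)
        (f (threeC (fun x => V x < k) (fun x => V x = k))) = 0 + 1 := by omega
    have hVZ : V (f (threeC (fun x => V x < k) (fun x => V x = k))) = k :=
      (threeC_at1 hZZ).2
    have hsepZ : IsSeparation (twoC (fun x => V x ≤ k))
        (threeC (fun x => V x < k) (fun x => V x = k)) 0 := by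
      refine ⟨hWcan, ?_, ?_, ?_, ⟨d, ?_, ?_⟩, ⟨f V, ?_, ?_⟩⟩
      · intro a ha; omega
      · intro a ha
        have hVa : V a ≤ k := twoC_zero (p := fun x => V x ≤ k) ha
        by_cases hc : V a < k
        · exact Or.inl (threeC_v0 hc)
        · exact Or.inr (threeC_v1 hc (by omega))
      · intro a ha
        have h2 : ¬ V a ≤ k := twoC_one (p := fun x => V x ≤ k) (by have := twoC_le (fun x => V x ≤ k) a; omega)
        have h3 : threeC (fun x => V x < k) (fun x => V x = k) a = 2 :=
          threeC_v2 (by omega) (by omega)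
        have h4 : twoC (fun x => V x ≤ k) a = 1 := twoC_neg h2
        omega
      · exact twoC_pos (by omega)
      · exact threeC_v0 hdlt
      · exact twoC_pos (by omega)
      · exact threeC_v1 (by omega) hk
    have hZW := ruleii hφ hresp hsepZ hZZ
    have hVW : V (f (twoC (fun x => V x ≤ k))) = k := (threeC_at1 hZW).2
    have hsepX : IsSeparation (twoC (fun x => V x ≤ k))
        (threeC (fun x => V x = k) (fun x => V x < k)) 0 := by
      refine ⟨hWcan, ?_, ?_, ?_, ⟨f V, ?_, ?_⟩, ⟨d, ?_, ?_⟩⟩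
      · intro a ha; omega
      · intro a ha
        have hVa : V a ≤ k := twoC_zero (p := fun x => V x ≤ k) ha
        by_cases hc : V a = k
        · exact Or.inl (threeC_v0 hc)
        · exact Or.inr (threeC_v1 hc (by omega))
      · intro a ha
        have h2 : ¬ V a ≤ k := twoC_one (p := fun x => V x ≤ k) (by have := twoC_le (fun x => V x ≤ k) a; omega)
        have h3 : threeC (fun x => V x = k) (fun x => V x < k) a = 2 :=
          threeC_v2 (by omega) (by omega)
        have h4 : twoC (fun x => V x ≤ k) a = 1 := twoC_neg h2
        omega
      · exact twoC_pos (by omega)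
      · exact threeC_v0 hk
      · exact twoC_pos (by omega)
      · exact threeC_v1 (by omega) hdlt
    have hXW : threeC (fun x => V x = k) (fun x => V x < k)
        (f (twoC (fun x => V x ≤ k))) = 0 := threeC_v0 hVW
    have hXX := rulei hφ hresp hsepX hXW
    have hVX : V (f (threeC (fun x => V x = k) (fun x => V x < k))) = k :=
      threeC_at0 (p := fun x => V x = k) hXX
    have hrefU : ∀ a b, twoC (fun x => V x = k) a < twoC (fun x => V x = k) b →
        threeC (fun x => V x = k) (fun x => V x < k) a <
          threeC (fun x => V x = k) (fun x => V x < k) b := by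
      intro a b h
      obtain ⟨h1', h2'⟩ := twoC_lt h
      have e1 : threeC (fun x => V x = k) (fun x => V x < k) a = 0 := threeC_v0 h1'
      have e2 : threeC (fun x => V x = k) (fun x => V x < k) b ≠ 0 := by
        intro hc
        exact h2' (threeC_at0 (p := fun x => V x = k) hc)
      omega
    have h2 := refine_rank hφ hresp hdir hUcan hXcan hrefU
    have h3 : twoC (fun x => V x = k) (f (threeC (fun x => V x = k) (fun x => V x < k))) = 0 :=
      twoC_pos hVX
    have h4 : twoC (fun x => V x = k) (f (twoC (fun x => V x = k))) = 0 := by omega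
    exact twoC_zero (p := fun x => V x = k) h4

private lemma star_core {φ : (α → ℕ) → α → ℝ} {f : (α → ℕ) → α}
    (hφ : ∀ R, φ R (f R) = 1 ∧ ∀ b, b ≠ f R → φ R b = 0)
    (hresp : SepResponsive φ) (hdir : SepDirect φ)
    (B : Finset α) (V : α → ℕ) (k : ℕ) (hV : Canonical V) (hfV : V (f V) = k)
    (hsub : ∀ x, V x = k → x ∈ B) (hBc : ∃ x, x ∉ B) :
    f (twoC (fun x => x ∈ B)) ∈ B := by
  obtain ⟨g, hg⟩ := hBc
  have hgk : V g ≠ k := fun h => hg (hsub g h)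
  have htop := topize hφ hresp hdir V k hV hfV
  have hUcan : Canonical (twoC (fun x => V x = k)) := twoC_canonical ⟨f V, hfV⟩
  by_cases hC : ∀ x, x ∈ B → V x = k
  · have heq : twoC (fun x => (x ∈ B)) = twoC (fun x => V x = k) := by
      funext x
      simp only [twoC]
      by_cases hx : x ∈ B
      · rw [if_pos hx, if_pos (hC x hx)]
      · have hvx : ¬ V x = k := fun h => hx (hsub x h)
        rw [if_neg hx, if_neg hvx]
    rw [heq]
    exact hsub _ htop
  · push_neg at hC
    obtain ⟨w, hwB, hwk⟩ := hC
    have hU'can : Canonical (threeC (fun x => V x = k) (fun x => x ∈ B)) :=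
      threeC_canonical ⟨f V, hfV⟩ ⟨w, hwk, hwB⟩
    have href1 : ∀ a b, twoC (fun x => V x = k) a < twoC (fun x => V x = k) b →
        threeC (fun x => V x = k) (fun x => x ∈ B) a <
          threeC (fun x => V x = k) (fun x => x ∈ B) b := by
      intro a b h
      obtain ⟨h1', h2'⟩ := twoC_lt h
      have e1 : threeC (fun x => V x = k) (fun x => x ∈ B) a = 0 := threeC_v0 h1'
      have e2 : threeC (fun x => V x = k) (fun x => x ∈ B) b ≠ 0 := by
        intro hc
        exact h2' (threeC_at0 (p := fun x => V x = k) hc)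
      omega
    have e1 := refine_rank hφ hresp hdir hUcan hU'can href1
    have hUU : twoC (fun x => V x = k) (f (twoC (fun x => V x = k))) = 0 :=
      twoC_pos htop
    have hUU' : twoC (fun x => V x = k)
        (f (threeC (fun x => V x = k) (fun x => x ∈ B))) = 0 := by omega
    have hVU' : V (f (threeC (fun x => V x = k) (fun x => x ∈ B))) = k :=
      twoC_zero (p := fun x => V x = k) hUU'
    have hfU'B : f (threeC (fun x => V x = k) (fun x => x ∈ B)) ∈ B := hsub _ hVU'
    have hQcan : Canonical (twoC (fun x => x ∈ B)) := twoC_canonical ⟨w, hwB⟩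
    have href2 : ∀ a b, twoC (fun x => x ∈ B) a < twoC (fun x => x ∈ B) b →
        threeC (fun x => V x = k) (fun x => x ∈ B) a <
          threeC (fun x => V x = k) (fun x => x ∈ B) b := by
      intro a b h
      obtain ⟨haB, hbB⟩ := twoC_lt h
      have e2 : threeC (fun x => V x = k) (fun x => x ∈ B) b = 2 :=
        threeC_v2 (fun h => hbB (hsub b h)) hbB
      have e1 : threeC (fun x => V x = k) (fun x => x ∈ B) a ≤ 1 := by
        by_cases hak : V a = k
        · have := threeC_v0 (p := fun x => V x = k) (q := fun x => x ∈ B) (x := a) hak; omega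
        · have := threeC_v1 (p := fun x => V x = k) (q := fun x => x ∈ B) (x := a) hak haB; omega
      omega
    have e2 := refine_rank hφ hresp hdir hQcan hU'can href2
    have h3 : twoC (fun x => x ∈ B) (f (threeC (fun x => V x = k) (fun x => x ∈ B))) = 0 :=
      twoC_pos hfU'B
    have h4 : twoC (fun x => x ∈ B) (f (twoC (fun x => x ∈ B))) = 0 := by omega
    exact twoC_zero (p := fun x => x ∈ B) h4

private lemma star {φ : (α → ℕ) → α → ℝ} {f : (α → ℕ) → α}
    (hφ : ∀ R, φ R (f R) = 1 ∧ ∀ b, b ≠ f R → φ R b = 0)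
    (hresp : SepResponsive φ) (hdir : SepDirect φ)
    (B : Finset α) (T : α → ℕ) (hT : Canonical T) (hfT : f T ∈ B)
    (hBc : ∃ x, x ∉ B) : f (twoC (fun x => x ∈ B)) ∈ B := by
  by_cases hA : ∀ x, T x = T (f T) → x ∈ B
  · exact star_core hφ hresp hdir B T (T (f T)) hT rfl hA hBc
  · push_neg at hA
    obtain ⟨v, hv, hvB⟩ := hA
    have hsep : IsSeparation T (splitO T (T (f T)) B) (T (f T)) :=
      splitO_isSep hT ⟨f T, rfl, hfT⟩ ⟨v, hv, hvB⟩
    have hT₁can : Canonical (splitO T (T (f T)) B) := sep_canonical hsep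
    have hfT₁ : splitO T (T (f T)) B (f T) = T (f T) := splitO_mem rfl hfT
    have h1 := rulei hφ hresp hsep hfT₁
    have hsub : ∀ x, splitO T (T (f T)) B x = T (f T) → x ∈ B := by
      intro x hx
      rcases lt_trichotomy (T x) (T (f T)) with h | h | h
      · rw [splitO_lt h] at hx; omega
      · by_cases hxB : x ∈ B
        · exact hxB
        · rw [splitO_nmem h hxB] at hx; omega
      · rw [splitO_gt h] at hx; omega
    exact star_core hφ hresp hdir B (splitO T (T (f T)) B) (T (f T)) hT₁can h1 hsub hBc

end Aux

/-- A deterministic mechanism is strategyproof if and only if it is separation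
monotonic (separation responsive and separation direct). -/
theorem deterministic_sp_iff_sep_monotonic {α : Type} [Fintype α]
    (φ : (α → ℕ) → α → ℝ)
    (hdet : ∀ R, (∀ a, φ R a = 0 ∨ φ R a = 1) ∧ ∑ a, φ R a = 1) :
    Strategyproof φ ↔ (SepResponsive φ ∧ SepDirect φ) := by

  classical
  have hex : ∀ R : α → ℕ, ∃ a, φ R a = 1 ∧ ∀ b, b ≠ a → φ R b = 0 := by
    intro R
    obtain ⟨h01, hsum⟩ := hdet R
    have hnonneg : ∀ a, 0 ≤ φ R a := by
      intro a
      rcases h01 a with h | h <;> rw [h] <;> norm_num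
    have hne : ∃ a, φ R a = 1 := by
      by_contra h
      push_neg at h
      have hz : ∀ a : α, φ R a = 0 := by
        intro a
        rcases h01 a with h0 | h1
        · exact h0
        · exact absurd h1 (h a)
      rw [Finset.sum_congr rfl (fun a _ => hz a)] at hsum
      simp at hsum
    obtain ⟨a, ha⟩ := hne
    refine ⟨a, ha, ?_⟩
    intro b hb
    rcases h01 b with h0 | h1
    · exact h0
    · exfalso
      have hpair : (2:ℝ) ≤ ∑ c, φ R c := by
        have heq2 : ∑ c ∈ ({a, b} : Finset α), φ R c = 2 := by
          rw [Finset.sum_pair (Ne.symm hb), ha, h1]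
          norm_num
        calc (2:ℝ) = ∑ c ∈ ({a, b} : Finset α), φ R c := heq2.symm
          _ ≤ ∑ c, φ R c :=
            Finset.sum_le_sum_of_subset_of_nonneg (Finset.subset_univ _)
              (fun c _ _ => hnonneg c)
      rw [hsum] at hpair
      linarith
  choose f hf1 hf2 using hex
  have hφ : ∀ R, φ R (f R) = 1 ∧ ∀ b, b ≠ f R → φ R b = 0 := fun R => ⟨hf1 R, hf2 R⟩
  constructor
  · intro hsp
    have key : ∀ U V κ, IsSeparation U V κ → U (f U) ≤ U (f V) ∧ V (f V) ≤ V (f U) := by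
      intro U V κ hsep
      have hUc : Canonical U := hsep.1
      have hVc : Canonical V := sep_canonical hsep
      exact ⟨(SD_det φ f hφ U U V).mp (hsp U V hUc hVc),
        (SD_det φ f hφ V V U).mp (hsp V U hVc hUc)⟩
    constructor
    · intro R R' κ hsep
      obtain ⟨h1, h2⟩ := key R R' κ hsep
      have hp1 := sep_pos hsep (f R)
      have hp2 := sep_pos hsep (f R')
      rw [probOf_det φ f hφ, probOf_det φ f hφ, probOf_det φ f hφ, probOf_det φ f hφ]
      constructor
      · by_cases hb : R' (f R) = κ
        · have hb2 : R' (f R') = κ := by omega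
          rw [if_pos hb, if_pos hb2]
        · rw [if_neg hb]
          split_ifs <;> norm_num
      · by_cases hb : R' (f R') = κ + 1
        · have hb2 : R' (f R) = κ + 1 := by omega
          rw [if_pos hb, if_pos hb2]
        · rw [if_neg hb]
          split_ifs <;> norm_num
    · intro R R' κ hsep hprem
      exfalso
      obtain ⟨k, hk⟩ := hprem
      rw [probOf_det φ f hφ, probOf_det φ f hφ] at hk
      have hne : R (f R) ≠ R (f R') := by
        by_contra h
        rw [h] at hk
        exact hk rfl
      obtain ⟨h1, h2⟩ := key R R' κ hsep
      have hp1 := sep_pos hsep (f R)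
      have hp2 := sep_pos hsep (f R')
      omega
  · rintro ⟨hresp, hdir⟩
    intro R T hR hT
    rw [SD_det φ f hφ]
    by_contra hcon
    push_neg at hcon
    have hfTB : f T ∈ Finset.univ.filter (fun x => R x < R (f R)) := by
      simp only [Finset.mem_filter, Finset.mem_univ, true_and]
      exact hcon
    have hfRB : f R ∉ Finset.univ.filter (fun x => R x < R (f R)) := by
      simp
    have hstar := star hφ hresp hdir (Finset.univ.filter (fun x => R x < R (f R))) T hT
      hfTB ⟨f R, hfRB⟩
    have hQcan : Canonical (twoC (fun x => x ∈ Finset.univ.filter (fun y => R y < R (f R)))) :=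
      twoC_canonical ⟨f T, hfTB⟩
    have href : ∀ a b, twoC (fun x => x ∈ Finset.univ.filter (fun y => R y < R (f R))) a <
        twoC (fun x => x ∈ Finset.univ.filter (fun y => R y < R (f R))) b → R a < R b := by
      intro a b h
      obtain ⟨ha, hb⟩ := twoC_lt h
      simp only [Finset.mem_filter, Finset.mem_univ, true_and] at ha hb
      omega
    have e := refine_rank hφ hresp hdir hQcan hR href
    have h1 : twoC (fun x => x ∈ Finset.univ.filter (fun y => R y < R (f R))) (f R) = 1 :=
      twoC_neg hfRB
    have h2 : twoC (fun x => x ∈ Finset.univ.filter (fun y => R y < R (f R)))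
        (f (twoC (fun x => x ∈ Finset.univ.filter (fun y => R y < R (f R))))) = 0 :=
      twoC_pos hstar
    omega
end

section
/- If a mechanism φ is separation responsive, separation upper invariant, and separation lower invariant, then for every L-separation (R,R') with split class M_κ = M_κ^1 ∪ ... ∪ M_κ^L and every l̄ ∈ {1,...,L}, the cumulative probability Σ_{l=1}^{l̄} φ_{M_κ^l}(R') ≥ φ_{⋃_{l≤l̄} M_κ^l}(R); in particular φ(R') stochastically dominates φ(R) at R'. -/
open Finset

/-- `(R,R')` is an `L`-separation with split at index `κ`: the class `M_κ` of `R`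
is replaced by `L ≥ 2` nonempty, strictly ranked subclasses
`M_κ^l = classOf R' (κ + l)` for `l = 0, …, L-1`; other classes are unchanged
(those below `κ` keep their rank, those above are shifted by `L - 1`). -/
def IsLSeparation {α : Type} [Fintype α] (R R' : α → ℕ) (κ L : ℕ) : Prop :=
  Canonical R ∧ 2 ≤ L ∧
  (∀ a, R a < κ → R' a = R a) ∧
  (∀ a, R a = κ → κ ≤ R' a ∧ R' a < κ + L) ∧
  (∀ a, κ < R a → R' a = R a + (L - 1)) ∧
  (∀ l, l < L → ∃ a, R a = κ ∧ R' a = κ + l)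

lemma sum_classOf_range {α : Type} [Fintype α] (x : α → ℝ) (S : α → ℕ) (c n : ℕ) :
    ∑ k ∈ Finset.range n, probOf x (classOf S (c + k)) =
    ∑ a ∈ Finset.univ.filter (fun a => c ≤ S a ∧ S a < c + n), x a := by
  classical
  rw [← Finset.sum_fiberwise_of_maps_to (g := fun a => S a - c) (t := Finset.range n)
      (fun a ha => by
        simp only [Finset.mem_filter] at ha
        simp only [Finset.mem_range]
        omega) x]
  refine Finset.sum_congr rfl fun k hk => ?_
  simp only [Finset.mem_range] at hk
  unfold probOf classOf
  refine Finset.sum_congr ?_ fun _ _ => rfl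
  ext a
  simp only [Finset.mem_filter, Finset.mem_univ, true_and]
  omega

lemma split3 {α : Type} [Fintype α] (x : α → ℝ) (S : α → ℕ) (c : ℕ) :
    ∑ a, x a = (∑ a ∈ Finset.univ.filter (fun a => S a < c), x a) + probOf x (classOf S c)
      + ∑ a ∈ Finset.univ.filter (fun a => c < S a), x a := by
  classical
  have h1 := Finset.sum_filter_add_sum_filter_not Finset.univ (fun a => S a < c) x
  have h2 := Finset.sum_filter_add_sum_filter_not
    (Finset.univ.filter (fun a => ¬ S a < c)) (fun a => S a = c) x
  rw [Finset.filter_filter, Finset.filter_filter] at h2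
  have e1 : Finset.univ.filter (fun a => ¬ S a < c ∧ S a = c) = classOf S c := by
    ext a; simp only [classOf, Finset.mem_filter, Finset.mem_univ, true_and]; omega
  have e2 : Finset.univ.filter (fun a => ¬ S a < c ∧ ¬ S a = c)
      = Finset.univ.filter (fun a => c < S a) := by
    ext a; simp only [Finset.mem_filter, Finset.mem_univ, true_and]; omega
  rw [e1, e2] at h2
  unfold probOf
  linarith

lemma meq2 {α : Type} [Fintype α] (φ : (α → ℕ) → α → ℝ) (hlot : ∀ R, IsLottery (φ R))
    (hupper : SepUpperInvariant φ) (hlower : SepLowerInvariant φ)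
    {R R' : α → ℕ} {κ : ℕ} (hsep : IsSeparation R R' κ) :
    probOf (φ R) (classOf R κ) = probOf (φ R') (classOf R κ) := by
  classical
  set N := Finset.univ.sup R + 1 with hN
  have t1 := split3 (φ R) R κ
  have t2 := split3 (φ R') R κ
  have eu : Finset.univ.filter (fun a => (0:ℕ) ≤ R a ∧ R a < 0 + κ)
      = Finset.univ.filter (fun a => R a < κ) := by
    ext a; simp only [Finset.mem_filter, Finset.mem_univ, true_and]; omega
  have el : Finset.univ.filter (fun a => κ + 1 ≤ R a ∧ R a < κ + 1 + N)
      = Finset.univ.filter (fun a => κ < R a) := by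
    ext a; simp only [Finset.mem_filter, Finset.mem_univ, true_and]
    have := Finset.le_sup (f := R) (Finset.mem_univ a)
    omega
  have hu : ∑ a ∈ Finset.univ.filter (fun a => R a < κ), φ R a
      = ∑ a ∈ Finset.univ.filter (fun a => R a < κ), φ R' a := by
    have h1 := sum_classOf_range (φ R) R 0 κ
    have h2 := sum_classOf_range (φ R') R 0 κ
    rw [eu] at h1 h2
    rw [← h1, ← h2]
    exact Finset.sum_congr rfl fun k hk =>
      hupper R R' κ hsep (0 + k) (by simpa using Finset.mem_range.mp hk)
  have hl : ∑ a ∈ Finset.univ.filter (fun a => κ < R a), φ R a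
      = ∑ a ∈ Finset.univ.filter (fun a => κ < R a), φ R' a := by
    have h1 := sum_classOf_range (φ R) R (κ + 1) N
    have h2 := sum_classOf_range (φ R') R (κ + 1) N
    rw [el] at h1 h2
    rw [← h1, ← h2]
    exact Finset.sum_congr rfl fun k hk =>
      hlower R R' κ hsep (κ + 1 + k) (by omega)
  have s1 := (hlot R).2
  have s2 := (hlot R').2
  linarith

lemma main_lemma {α : Type} [Fintype α] (φ : (α → ℕ) → α → ℝ) (hlot : ∀ R, IsLottery (φ R))
    (hresp : SepResponsive φ)
    (hupper : SepUpperInvariant φ) (hlower : SepLowerInvariant φ) :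
    ∀ K : ℕ, ∀ R R' : α → ℕ, ∀ κ : ℕ, IsLSeparation R R' κ (K + 2) →
      ((∀ k, k < κ → probOf (φ R) (classOf R k) = probOf (φ R') (classOf R k)) ∧
       (∀ k, κ < k → probOf (φ R) (classOf R k) = probOf (φ R') (classOf R k)) ∧
       (probOf (φ R) (classOf R κ) = probOf (φ R') (classOf R κ)) ∧
       (∀ lbar, lbar < K + 2 →
         ∑ l ∈ Finset.range (lbar + 1), probOf (φ R') (classOf R' (κ + l)) ≥
         ∑ l ∈ Finset.range (lbar + 1), probOf (φ R) (classOf R' (κ + l)))) := by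
  intro K
  induction K with
  | zero =>
    intro R R' κ hsep
    obtain ⟨hcan, -, hlt, hmid, hgt0, hwit⟩ := hsep
    have h2 : IsSeparation R R' κ := by
      refine ⟨hcan, hlt, fun a h => by have := hmid a h; omega,
        fun a h => by have := hgt0 a h; omega, ?_, ?_⟩
      · obtain ⟨a, h1, h2⟩ := hwit 0 (by omega); exact ⟨a, h1, by omega⟩
      · obtain ⟨a, h1, h2⟩ := hwit 1 (by omega); exact ⟨a, h1, by omega⟩
    have htri : ∀ j, (R j < κ ∧ R' j = R j) ∨ (R j = κ ∧ κ ≤ R' j ∧ R' j < κ + 2) ∨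
        (κ < R j ∧ R' j = R j + 1) := by
      intro j
      rcases lt_trichotomy (R j) κ with h | h | h
      · exact Or.inl ⟨h, hlt j h⟩
      · exact Or.inr (Or.inl ⟨h, (hmid j h).1, by have := (hmid j h).2; omega⟩)
      · exact Or.inr (Or.inr ⟨h, by have := hgt0 j h; omega⟩)
    have hP : ∀ x : α → ℝ, ∑ l ∈ Finset.range 2, probOf x (classOf R' (κ + l))
        = probOf x (classOf R κ) := by
      intro x
      rw [sum_classOf_range x R' κ 2]
      unfold probOf
      refine Finset.sum_congr ?_ fun _ _ => rfl
      ext a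
      simp only [classOf, Finset.mem_filter, Finset.mem_univ, true_and]
      rcases htri a with ⟨h1, h2⟩ | ⟨h1, h2, h3⟩ | ⟨h1, h2⟩ <;> omega
    have hc := meq2 φ hlot hupper hlower h2
    refine ⟨hupper R R' κ h2, hlower R R' κ h2, hc, ?_⟩
    intro lbar hl
    interval_cases lbar
    · simpa using (hresp R R' κ h2).1
    · rw [hP (φ R'), hP (φ R)]
      exact ge_of_eq hc.symm
  | succ K IH =>
    intro R R' κ hsep
    obtain ⟨hcan, -, hlt, hmid, hgt0, hwit0⟩ := hsep
    have hgt : ∀ a, κ < R a → R' a = R a + (K + 2) := by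
      intro a h; have := hgt0 a h; omega
    have hwit : ∀ l, l < K + 3 → ∃ a, R a = κ ∧ R' a = κ + l := by
      intro l hl; exact hwit0 l (by omega)
    have hmid' : ∀ a, R a = κ → κ ≤ R' a ∧ R' a < κ + K + 3 := by
      intro a h; have := hmid a h; omega
    -- the bottom-merge order Q
    obtain ⟨Q, hQa⟩ : ∃ Q : α → ℕ, ∀ a,
        (R a < κ ∧ Q a = R a ∧ R' a = R a) ∨
        (R a = κ ∧ Q a = min (R' a) (κ + K + 1) ∧ κ ≤ R' a ∧ R' a < κ + K + 3) ∨
        (κ < R a ∧ Q a = R a + (K + 1) ∧ R' a = R a + (K + 2)) := by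
      refine ⟨fun a => if R a < κ then R a else
        (if R a = κ then min (R' a) (κ + K + 1) else R a + (K + 1)), fun a => ?_⟩
      rcases lt_trichotomy (R a) κ with h | h | h
      · exact Or.inl ⟨h, by dsimp only; rw [if_pos h], hlt a h⟩
      · exact Or.inr (Or.inl ⟨h, by dsimp only; rw [if_neg (by omega), if_pos h],
          (hmid' a h).1, (hmid' a h).2⟩)
      · exact Or.inr (Or.inr ⟨h, by dsimp only; rw [if_neg (by omega), if_neg (by omega)], hgt a h⟩)
    -- the top-merge order Q'
    obtain ⟨Q', hQ'a⟩ : ∃ Q' : α → ℕ, ∀ a,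
        (R a < κ ∧ Q' a = R a ∧ R' a = R a) ∨
        (R a = κ ∧ ((R' a = κ + K + 2 ∧ Q' a = κ + 1) ∨ (R' a < κ + K + 2 ∧ Q' a = κ)) ∧
          κ ≤ R' a) ∨
        (κ < R a ∧ Q' a = R a + 1 ∧ R' a = R a + (K + 2)) := by
      refine ⟨fun a => if R a < κ then R a else
        (if R a = κ then (if R' a = κ + K + 2 then κ + 1 else κ) else R a + 1), fun a => ?_⟩
      rcases lt_trichotomy (R a) κ with h | h | h
      · exact Or.inl ⟨h, by dsimp only; rw [if_pos h], hlt a h⟩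
      · refine Or.inr (Or.inl ⟨h, ?_, (hmid' a h).1⟩)
        by_cases h2 : R' a = κ + K + 2
        · exact Or.inl ⟨h2, by dsimp only; rw [if_neg (by omega), if_pos h, if_pos h2]⟩
        · exact Or.inr ⟨by have := (hmid' a h).2; omega,
            by dsimp only; rw [if_neg (by omega), if_pos h, if_neg h2]⟩
      · exact Or.inr (Or.inr ⟨h, by dsimp only; rw [if_neg (by omega), if_neg (by omega)], hgt a h⟩)
    have ha0 : ∃ a0, R a0 = κ := by obtain ⟨a, h1, -⟩ := hwit 0 (by omega); exact ⟨a, h1⟩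
    obtain ⟨a0, ha0⟩ := ha0
    have hcanlow : ∀ k, k ≤ κ → ∃ b, R b = k := fun k hk => hcan a0 k (by omega)
    -- canonicity of Q
    have hcanQ : Canonical Q := by
      intro a k hk
      rcases Nat.lt_or_ge k κ with h | h
      · obtain ⟨b, hb⟩ := hcanlow k (by omega)
        exact ⟨b, by rcases hQa b with ⟨h1, h2, h3⟩ | ⟨h1, h2, h3, h4⟩ | ⟨h1, h2, h3⟩ <;> omega⟩
      rcases Nat.lt_or_ge (κ + K + 1) k with h' | h'
      · -- k > κ + K + 1 : must come from a high class
        have hRa : κ < R a ∧ Q a = R a + (K + 1) := by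
          rcases hQa a with ⟨h1, h2, h3⟩ | ⟨h1, h2, h3, h4⟩ | ⟨h1, h2, h3⟩ <;>
            first | omega | exact ⟨h1, h2⟩
        obtain ⟨b, hb⟩ := hcan a (k - (K + 1)) (by omega)
        refine ⟨b, ?_⟩
        rcases hQa b with ⟨h1, h2, h3⟩ | ⟨h1, h2, h3, h4⟩ | ⟨h1, h2, h3⟩ <;> omega
      · -- κ ≤ k ≤ κ + K + 1 : a subclass witness
        obtain ⟨b, hb1, hb2⟩ := hwit (k - κ) (by omega)
        refine ⟨b, ?_⟩
        rcases hQa b with ⟨h1, h2, h3⟩ | ⟨h1, h2, h3, h4⟩ | ⟨h1, h2, h3⟩ <;> omega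
    -- canonicity of Q'
    have hcanQ' : Canonical Q' := by
      intro a k hk
      rcases Nat.lt_or_ge k κ with h | h
      · obtain ⟨b, hb⟩ := hcanlow k (by omega)
        exact ⟨b, by rcases hQ'a b with ⟨h1, h2, h3⟩ | ⟨h1, ⟨h2, h3⟩ | ⟨h2, h3⟩, h4⟩ |
          ⟨h1, h2, h3⟩ <;> omega⟩
      rcases Nat.lt_or_ge (κ + 1) k with h' | h'
      · have hRa : κ < R a ∧ Q' a = R a + 1 := by
          rcases hQ'a a with ⟨h1, h2, h3⟩ | ⟨h1, ⟨h2, h3⟩ | ⟨h2, h3⟩, h4⟩ | ⟨h1, h2, h3⟩ <;>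
            first | omega | exact ⟨h1, h2⟩
        obtain ⟨b, hb⟩ := hcan a (k - 1) (by omega)
        refine ⟨b, ?_⟩
        rcases hQ'a b with ⟨h1, h2, h3⟩ | ⟨h1, ⟨h2, h3⟩ | ⟨h2, h3⟩, h4⟩ | ⟨h1, h2, h3⟩ <;> omega
      rcases Nat.lt_or_ge k (κ + 1) with h'' | h''
      · -- k = κ
        obtain ⟨b, hb1, hb2⟩ := hwit 0 (by omega)
        refine ⟨b, ?_⟩
        rcases hQ'a b with ⟨h1, h2, h3⟩ | ⟨h1, ⟨h2, h3⟩ | ⟨h2, h3⟩, h4⟩ | ⟨h1, h2, h3⟩ <;> omega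
      · -- k = κ + 1
        obtain ⟨b, hb1, hb2⟩ := hwit (K + 2) (by omega)
        refine ⟨b, ?_⟩
        rcases hQ'a b with ⟨h1, h2, h3⟩ | ⟨h1, ⟨h2, h3⟩ | ⟨h2, h3⟩, h4⟩ | ⟨h1, h2, h3⟩ <;> omega
    -- (R, Q) is a (K+2)-separation at κ
    have hRQ : IsLSeparation R Q κ (K + 2) := by
      refine ⟨hcan, by omega, ?_, ?_, ?_, ?_⟩
      · intro a h; rcases hQa a with ⟨h1, h2, h3⟩ | ⟨h1, h2, h3, h4⟩ | ⟨h1, h2, h3⟩ <;> omega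
      · intro a h; rcases hQa a with ⟨h1, h2, h3⟩ | ⟨h1, h2, h3, h4⟩ | ⟨h1, h2, h3⟩ <;> omega
      · intro a h; rcases hQa a with ⟨h1, h2, h3⟩ | ⟨h1, h2, h3, h4⟩ | ⟨h1, h2, h3⟩ <;> omega
      · intro l hl
        obtain ⟨a, h1, h2⟩ := hwit l (by omega)
        exact ⟨a, h1, by rcases hQa a with ⟨g1, g2, g3⟩ | ⟨g1, g2, g3, g4⟩ | ⟨g1, g2, g3⟩ <;> omega⟩
    -- (Q, R') is a separation at κ + K + 1
    have hQR' : IsSeparation Q R' (κ + K + 1) := by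
      refine ⟨hcanQ, ?_, ?_, ?_, ?_, ?_⟩
      · intro a h; rcases hQa a with ⟨h1, h2, h3⟩ | ⟨h1, h2, h3, h4⟩ | ⟨h1, h2, h3⟩ <;> omega
      · intro a h; rcases hQa a with ⟨h1, h2, h3⟩ | ⟨h1, h2, h3, h4⟩ | ⟨h1, h2, h3⟩ <;> omega
      · intro a h; rcases hQa a with ⟨h1, h2, h3⟩ | ⟨h1, h2, h3, h4⟩ | ⟨h1, h2, h3⟩ <;> omega
      · obtain ⟨a, h1, h2⟩ := hwit (K + 1) (by omega)
        exact ⟨a, by rcases hQa a with ⟨g1, g2, g3⟩ | ⟨g1, g2, g3, g4⟩ | ⟨g1, g2, g3⟩ <;> omega,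
          by omega⟩
      · obtain ⟨a, h1, h2⟩ := hwit (K + 2) (by omega)
        exact ⟨a, by rcases hQa a with ⟨g1, g2, g3⟩ | ⟨g1, g2, g3, g4⟩ | ⟨g1, g2, g3⟩ <;> omega,
          by omega⟩
    -- (R, Q') is a separation at κ
    have hRQ' : IsSeparation R Q' κ := by
      refine ⟨hcan, ?_, ?_, ?_, ?_, ?_⟩
      · intro a h; rcases hQ'a a with ⟨h1, h2, h3⟩ | ⟨h1, ⟨h2, h3⟩ | ⟨h2, h3⟩, h4⟩ |
          ⟨h1, h2, h3⟩ <;> omega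
      · intro a h; rcases hQ'a a with ⟨h1, h2, h3⟩ | ⟨h1, ⟨h2, h3⟩ | ⟨h2, h3⟩, h4⟩ |
          ⟨h1, h2, h3⟩ <;> omega
      · intro a h; rcases hQ'a a with ⟨h1, h2, h3⟩ | ⟨h1, ⟨h2, h3⟩ | ⟨h2, h3⟩, h4⟩ |
          ⟨h1, h2, h3⟩ <;> omega
      · obtain ⟨a, h1, h2⟩ := hwit 0 (by omega)
        exact ⟨a, h1, by rcases hQ'a a with ⟨g1, g2, g3⟩ | ⟨g1, ⟨g2, g3⟩ | ⟨g2, g3⟩, g4⟩ |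
          ⟨g1, g2, g3⟩ <;> omega⟩
      · obtain ⟨a, h1, h2⟩ := hwit (K + 2) (by omega)
        exact ⟨a, h1, by rcases hQ'a a with ⟨g1, g2, g3⟩ | ⟨g1, ⟨g2, g3⟩ | ⟨g2, g3⟩, g4⟩ |
          ⟨g1, g2, g3⟩ <;> omega⟩
    -- (Q', R') is a (K+2)-separation at κ
    have hQ'R' : IsLSeparation Q' R' κ (K + 2) := by
      refine ⟨hcanQ', by omega, ?_, ?_, ?_, ?_⟩
      · intro a h; rcases hQ'a a with ⟨h1, h2, h3⟩ | ⟨h1, ⟨h2, h3⟩ | ⟨h2, h3⟩, h4⟩ |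
          ⟨h1, h2, h3⟩ <;> omega
      · intro a h; rcases hQ'a a with ⟨h1, h2, h3⟩ | ⟨h1, ⟨h2, h3⟩ | ⟨h2, h3⟩, h4⟩ |
          ⟨h1, h2, h3⟩ <;> omega
      · intro a h; rcases hQ'a a with ⟨h1, h2, h3⟩ | ⟨h1, ⟨h2, h3⟩ | ⟨h2, h3⟩, h4⟩ |
          ⟨h1, h2, h3⟩ <;> omega
      · intro l hl
        obtain ⟨a, h1, h2⟩ := hwit l (by omega)
        exact ⟨a, by rcases hQ'a a with ⟨g1, g2, g3⟩ | ⟨g1, ⟨g2, g3⟩ | ⟨g2, g3⟩, g4⟩ |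
          ⟨g1, g2, g3⟩ <;> omega, by omega⟩
    obtain ⟨Ia, Ib, Ic, Id⟩ := IH R Q κ hRQ
    obtain ⟨-, -, -, Id'⟩ := IH Q' R' κ hQ'R'
    -- class-set identities
    have EQ1 : ∀ k, k < κ → classOf Q k = classOf R k := by
      intro k hk
      ext a; simp only [classOf, Finset.mem_filter, Finset.mem_univ, true_and]
      rcases hQa a with ⟨h1, h2, h3⟩ | ⟨h1, h2, h3, h4⟩ | ⟨h1, h2, h3⟩ <;> omega
    have EQ2 : ∀ k, κ < k → classOf Q (k + (K + 1)) = classOf R k := by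
      intro k hk
      ext a; simp only [classOf, Finset.mem_filter, Finset.mem_univ, true_and]
      rcases hQa a with ⟨h1, h2, h3⟩ | ⟨h1, h2, h3, h4⟩ | ⟨h1, h2, h3⟩ <;> omega
    have EQ3 : Finset.univ.filter (fun a => κ ≤ Q a ∧ Q a < κ + (K + 2)) = classOf R κ := by
      ext a; simp only [classOf, Finset.mem_filter, Finset.mem_univ, true_and]
      rcases hQa a with ⟨h1, h2, h3⟩ | ⟨h1, h2, h3, h4⟩ | ⟨h1, h2, h3⟩ <;> omega
    have EQ4 : ∀ l, l ≤ K → classOf Q (κ + l) = classOf R' (κ + l) := by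
      intro l hl
      ext a; simp only [classOf, Finset.mem_filter, Finset.mem_univ, true_and]
      rcases hQa a with ⟨h1, h2, h3⟩ | ⟨h1, h2, h3, h4⟩ | ⟨h1, h2, h3⟩ <;> omega
    have EQ5 : Finset.univ.filter (fun a => κ ≤ R' a ∧ R' a < κ + (K + 2)) = classOf Q' κ := by
      ext a; simp only [classOf, Finset.mem_filter, Finset.mem_univ, true_and]
      rcases hQ'a a with ⟨h1, h2, h3⟩ | ⟨h1, ⟨h2, h3⟩ | ⟨h2, h3⟩, h4⟩ | ⟨h1, h2, h3⟩ <;> omega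
    have EQ6 : Finset.univ.filter (fun a => κ ≤ R' a ∧ R' a < κ + (K + 3)) = classOf R κ := by
      ext a; simp only [classOf, Finset.mem_filter, Finset.mem_univ, true_and]
      rcases hQa a with ⟨h1, h2, h3⟩ | ⟨h1, h2, h3, h4⟩ | ⟨h1, h2, h3⟩ <;> omega
    -- component (a)
    have Ca : ∀ k, k < κ → probOf (φ R) (classOf R k) = probOf (φ R') (classOf R k) := by
      intro k hk
      have h := hupper Q R' (κ + K + 1) hQR' k (by omega)
      rw [EQ1 k hk] at h
      exact (Ia k hk).trans h
    -- component (b)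
    have Cb : ∀ k, κ < k → probOf (φ R) (classOf R k) = probOf (φ R') (classOf R k) := by
      intro k hk
      have h := hlower Q R' (κ + K + 1) hQR' (k + (K + 1)) (by omega)
      rw [EQ2 k hk] at h
      exact (Ib k hk).trans h
    -- partition of M_κ into the classes of Q
    have hPart : ∀ x : α → ℝ, probOf x (classOf R κ)
        = ∑ l ∈ Finset.range (K + 2), probOf x (classOf Q (κ + l)) := by
      intro x
      rw [sum_classOf_range x Q κ (K + 2), EQ3]
      rfl
    -- component (c)
    have Cc : probOf (φ R) (classOf R κ) = probOf (φ R') (classOf R κ) := by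
      have hsum : ∑ l ∈ Finset.range (K + 2), probOf (φ Q) (classOf Q (κ + l))
          = ∑ l ∈ Finset.range (K + 2), probOf (φ R') (classOf Q (κ + l)) := by
        refine Finset.sum_congr rfl fun l hl => ?_
        rcases Nat.lt_or_ge l (K + 1) with h | h
        · exact hupper Q R' (κ + K + 1) hQR' (κ + l) (by omega)
        · have hleq : l = K + 1 := by simp only [Finset.mem_range] at hl; omega
          subst hleq
          have := meq2 φ hlot hupper hlower hQR'
          have e : κ + (K + 1) = κ + K + 1 := by omega
          rw [e]
          exact this
      rw [Ic, hPart (φ Q), hPart (φ R'), hsum]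
    refine ⟨Ca, Cb, Cc, ?_⟩
    -- component (d)
    intro lbar hl
    rcases Nat.lt_or_ge lbar (K + 1) with hA | hA
    · -- lbar ≤ K : use the bottom-merge chain
      have key := Id lbar (by omega)
      have eQ : ∀ l ∈ Finset.range (lbar + 1), classOf Q (κ + l) = classOf R' (κ + l) :=
        fun l hl' => EQ4 l (by simp only [Finset.mem_range] at hl'; omega)
      have s1 : ∑ l ∈ Finset.range (lbar + 1), probOf (φ R') (classOf R' (κ + l))
          = ∑ l ∈ Finset.range (lbar + 1), probOf (φ Q) (classOf Q (κ + l)) := by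
        refine Finset.sum_congr rfl fun l hl' => ?_
        rw [← eQ l hl']
        exact (hupper Q R' (κ + K + 1) hQR' (κ + l)
          (by simp only [Finset.mem_range] at hl'; omega)).symm
      have s2 : ∑ l ∈ Finset.range (lbar + 1), probOf (φ R) (classOf Q (κ + l))
          = ∑ l ∈ Finset.range (lbar + 1), probOf (φ R) (classOf R' (κ + l)) := by
        refine Finset.sum_congr rfl fun l hl' => ?_
        rw [eQ l hl']
      rw [s1, ← s2]
      exact key
    rcases Nat.lt_or_ge lbar (K + 2) with hB | hB
    · -- lbar = K + 1 : use the top-merge order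
      have hleq : lbar = K + 1 := by omega
      subst hleq
      have hP5 : ∀ x : α → ℝ, ∑ l ∈ Finset.range (K + 2), probOf x (classOf R' (κ + l))
          = probOf x (classOf Q' κ) := by
        intro x
        rw [sum_classOf_range x R' κ (K + 2), EQ5]
        rfl
      have key := Id' (K + 1) (by omega)
      have hr := (hresp R Q' κ hRQ').1
      have e1 := hP5 (φ Q')
      have e2 := hP5 (φ R)
      have e3 := hP5 (φ R')
      linarith
    · -- lbar = K + 2 : the whole class, equality
      have hleq : lbar = K + 2 := by omega
      subst hleq
      have hP6 : ∀ x : α → ℝ, ∑ l ∈ Finset.range (K + 3), probOf x (classOf R' (κ + l))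
          = probOf x (classOf R κ) := by
        intro x
        rw [sum_classOf_range x R' κ (K + 3), EQ6]
        rfl
      rw [hP6 (φ R'), hP6 (φ R)]
      exact ge_of_eq Cc.symm

/-- If a mechanism is separation responsive, separation upper invariant and
separation lower invariant, then for every `L`-separation and every `l̄`, the
cumulative probability of the top `l̄` subclasses of the split class weakly
increases; in particular `φ(R')` stochastically dominates `φ(R)` at `R'`. -/
theorem axioms_imply_L_separation_sp {α : Type} [Fintype α]
    (φ : (α → ℕ) → α → ℝ) (hlot : ∀ R, IsLottery (φ R))
    (hresp : SepResponsive φ)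
    (hupper : SepUpperInvariant φ) (hlower : SepLowerInvariant φ) :
    ∀ R R' κ L, IsLSeparation R R' κ L →
      (∀ lbar, lbar < L →
        ∑ l ∈ Finset.range (lbar + 1), probOf (φ R') (classOf R' (κ + l)) ≥
        ∑ l ∈ Finset.range (lbar + 1), probOf (φ R) (classOf R' (κ + l))) ∧
      SD R' (φ R') (φ R) := by
  
  intro R R' κ L hsep
  obtain ⟨K, rfl⟩ : ∃ K, L = K + 2 := ⟨L - 2, by have := hsep.2.1; omega⟩
  obtain ⟨Ma, Mb, Mc, Md⟩ := main_lemma φ hlot hresp hupper hlower K R R' κ hsep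
  obtain ⟨hcan, -, hlt, hmid, hgt0, hwit⟩ := hsep
  have htri : ∀ j, (R j < κ ∧ R' j = R j) ∨ (R j = κ ∧ κ ≤ R' j ∧ R' j < κ + (K + 2)) ∨
      (κ < R j ∧ R' j = R j + (K + 1)) := by
    intro j
    rcases lt_trichotomy (R j) κ with h | h | h
    · exact Or.inl ⟨h, hlt j h⟩
    · exact Or.inr (Or.inl ⟨h, (hmid j h).1, (hmid j h).2⟩)
    · exact Or.inr (Or.inr ⟨h, by have := hgt0 j h; omega⟩)
  refine ⟨Md, ?_⟩
  intro a
  set t := R' a with ht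
  clear_value t
  rcases Nat.lt_or_ge t κ with h1 | h1
  · -- t below the split class : equality
    have e : Finset.univ.filter (fun j => R' j ≤ t)
        = Finset.univ.filter (fun j => (0:ℕ) ≤ R j ∧ R j < 0 + (t + 1)) := by
      ext j; simp only [Finset.mem_filter, Finset.mem_univ, true_and]
      rcases htri j with ⟨g1, g2⟩ | ⟨g1, g2, g3⟩ | ⟨g1, g2⟩ <;> omega
    rw [e, ← sum_classOf_range (φ R') R 0 (t + 1), ← sum_classOf_range (φ R) R 0 (t + 1)]
    refine ge_of_eq (Finset.sum_congr rfl fun k hk => ?_).symm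
    exact Ma (0 + k) (by simp only [Finset.mem_range] at hk; omega)
  rcases Nat.lt_or_ge t (κ + (K + 2)) with h2 | h2
  · -- t inside the split class
    have hsplit : ∀ x : α → ℝ, ∑ j ∈ Finset.univ.filter (fun j => R' j ≤ t), x j
        = (∑ j ∈ Finset.univ.filter (fun j => (0:ℕ) ≤ R j ∧ R j < 0 + κ), x j)
          + ∑ j ∈ Finset.univ.filter (fun j => κ ≤ R' j ∧ R' j < κ + (t - κ + 1)), x j := by
      intro x
      rw [← Finset.sum_filter_add_sum_filter_not
        (Finset.univ.filter (fun j => R' j ≤ t)) (fun j => R j < κ) x,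
        Finset.filter_filter, Finset.filter_filter]
      congr 1
      · refine Finset.sum_congr ?_ fun _ _ => rfl
        ext j; simp only [Finset.mem_filter, Finset.mem_univ, true_and]
        rcases htri j with ⟨g1, g2⟩ | ⟨g1, g2, g3⟩ | ⟨g1, g2⟩ <;> omega
      · refine Finset.sum_congr ?_ fun _ _ => rfl
        ext j; simp only [Finset.mem_filter, Finset.mem_univ, true_and]
        rcases htri j with ⟨g1, g2⟩ | ⟨g1, g2, g3⟩ | ⟨g1, g2⟩ <;> omega
    rw [hsplit (φ R'), hsplit (φ R),
      ← sum_classOf_range (φ R') R 0 κ, ← sum_classOf_range (φ R) R 0 κ,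
      ← sum_classOf_range (φ R') R' κ (t - κ + 1), ← sum_classOf_range (φ R) R' κ (t - κ + 1)]
    refine add_le_add (le_of_eq ?_) ?_
    · exact Finset.sum_congr rfl fun k hk =>
        Ma (0 + k) (by simp only [Finset.mem_range] at hk; omega)
    · exact Md (t - κ) (by omega)
  · -- t below all subclasses : equality
    set s := t - (K + 1) with hs
    have e : Finset.univ.filter (fun j => R' j ≤ t)
        = Finset.univ.filter (fun j => R j ≤ s) := by
      ext j; simp only [Finset.mem_filter, Finset.mem_univ, true_and]
      rcases htri j with ⟨g1, g2⟩ | ⟨g1, g2, g3⟩ | ⟨g1, g2⟩ <;> omega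
    set N := Finset.univ.sup R + 1 with hN
    have hcompl : ∀ x : α → ℝ,
        (∑ j ∈ Finset.univ.filter (fun j => R j ≤ s), x j)
          + ∑ j ∈ Finset.univ.filter (fun j => s + 1 ≤ R j ∧ R j < s + 1 + N), x j
        = ∑ j, x j := by
      intro x
      rw [← Finset.sum_filter_add_sum_filter_not Finset.univ (fun j => R j ≤ s) x]
      congr 1
      refine Finset.sum_congr ?_ fun _ _ => rfl
      ext j; simp only [Finset.mem_filter, Finset.mem_univ, true_and]
      have := Finset.le_sup (f := R) (Finset.mem_univ j)
      omega
    have h3 : ∑ j ∈ Finset.univ.filter (fun j => s + 1 ≤ R j ∧ R j < s + 1 + N), φ R j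
        = ∑ j ∈ Finset.univ.filter (fun j => s + 1 ≤ R j ∧ R j < s + 1 + N), φ R' j := by
      rw [← sum_classOf_range (φ R) R (s + 1) N, ← sum_classOf_range (φ R') R (s + 1) N]
      exact Finset.sum_congr rfl fun k hk => Mb (s + 1 + k) (by omega)
    have c1 := hcompl (φ R)
    have c2 := hcompl (φ R')
    have s1 := (hlot R).2
    have s2 := (hlot R').2
    rw [e]
    linarith
end

section
/- For any two weak orders R, R' on a finite set M and any utility functions u consistent with R and u' consistent with R', the line segment {u_α = (1−α)u + αu' : α ∈ [0,1]} passes through a finite sequence of weak orders R = R^0, R^1, ..., R^S = R' such that for each consecutive pair, one of (R^s, R^{s+1}) or (R^{s+1}, R^s) is a multi-separation (i.e., one order refines the other by splitting indifference classes). -/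
open Finset
open scoped Classical

/-- A weak order (total preorder) on `α`: `R a b` means `a` is weakly preferred
to `b`. -/
def TotalPreorder {α : Type} (R : α → α → Prop) : Prop :=
  (∀ a b, R a b ∨ R b a) ∧ (∀ a b c, R a b → R b c → R a c)

/-- A nonnegative utility function `u` is consistent with `R`: weak preference gives
weakly higher utility and strict preference gives strictly higher utility. -/
def ConsistentStrict {α : Type} (u : α → ℝ) (R : α → α → Prop) : Prop :=
  (∀ a, 0 ≤ u a) ∧ (∀ a b, R a b → u b ≤ u a) ∧
  (∀ a b, R a b → ¬ R b a → u b < u a)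

/-- The point of the segment from `u` to `u'` at parameter `t`. -/
noncomputable def uSeg {α : Type} (u u' : α → ℝ) (t : ℝ) : α → ℝ :=
  fun a => (1 - t) * u a + t * u' a

/-- The weak order induced by a utility function `w`. -/
def ordOf {α : Type} (w : α → ℝ) : α → α → Prop := fun a b => w b ≤ w a

/-- `(P, Q)` or `(Q, P)` is a multi-separation: one of the two weak orders refines
the other (splitting indifference classes while preserving strict rankings). -/
def MultiSepPair {α : Type} (P Q : α → α → Prop) : Prop :=
  (∀ a b, Q a b → P a b) ∨ (∀ a b, P a b → Q a b)

/- ───────────────────────── auxiliary material ───────────────────────── -/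

noncomputable def dfun {α : Type} (u u' : α → ℝ) (a b : α) (t : ℝ) : ℝ :=
  uSeg u u' t a - uSeg u u' t b

def crossSet {α : Type} (u u' : α → ℝ) : Set ℝ :=
  {c | ∃ a b, dfun u u' a b c = 0 ∧ ¬ ∀ s, dfun u u' a b s = 0}

lemma dfun_eq {α : Type} (u u' : α → ℝ) (a b : α) (t : ℝ) :
    dfun u u' a b t = (u a - u b) + t * ((u' a - u' b) - (u a - u b)) := by
  simp only [dfun, uSeg]; ring

lemma crossSet_finite {α : Type} [Fintype α] (u u' : α → ℝ) :
    (crossSet u u').Finite := by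
  have hsub : crossSet u u' ⊆ ⋃ (a : α) (b : α),
      {c : ℝ | dfun u u' a b c = 0 ∧ ¬ ∀ s, dfun u u' a b s = 0} := by
    rintro c ⟨a, b, h1, h2⟩
    exact Set.mem_iUnion.2 ⟨a, Set.mem_iUnion.2 ⟨b, ⟨h1, h2⟩⟩⟩
  refine Set.Finite.subset ?_ hsub
  refine Set.finite_iUnion fun a => Set.finite_iUnion fun b => ?_
  apply Set.Subsingleton.finite
  rintro c1 ⟨h1, hn⟩ c2 ⟨h2, -⟩
  rw [dfun_eq] at h1 h2
  by_cases hB : (u' a - u' b) - (u a - u b) = 0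
  · exfalso
    apply hn
    intro s
    rw [dfun_eq, hB, mul_zero, add_zero]
    rw [hB, mul_zero, add_zero] at h1
    exact h1
  · have hc : (c1 - c2) * ((u' a - u' b) - (u a - u b)) = 0 := by
      linear_combination h1 - h2
    rcases mul_eq_zero.1 hc with h | h
    · linarith [sub_eq_zero.1 h]
    · exact absurd h hB

lemma ordOf_iff {α : Type} {R : α → α → Prop} (hR : TotalPreorder R)
    {u : α → ℝ} (hu : ConsistentStrict u R) (a b : α) : ordOf u a b ↔ R a b := by
  constructor
  · intro h
    by_contra hab
    rcases hR.1 a b with h1 | h2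
    · exact hab h1
    · exact absurd (show u b ≤ u a from h) (not_le.2 (hu.2.2 b a h2 hab))
  · exact hu.2.1 a b

lemma cross_key {α : Type} (u u' : α → ℝ) (t m : ℝ)
    (hm : m ∉ crossSet u u')
    (hbet : ∀ c ∈ crossSet u u', c ∉ Set.Ioo (min t m) (max t m)) :
    ∀ a b, ordOf (uSeg u u' m) a b → ordOf (uSeg u u' t) a b := by
  intro a b hQ
  by_contra hP
  simp only [ordOf, not_le] at hQ hP
  have hnz : ¬ ∀ s, dfun u u' a b s = 0 := by
    intro h
    have := h t
    simp only [dfun] at this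
    linarith
  have hdm0 : 0 ≤ dfun u u' a b m := by simp only [dfun]; linarith
  have hdm : 0 < dfun u u' a b m := by
    rcases lt_or_eq_of_le hdm0 with h | h
    · exact h
    · exact absurd ⟨a, b, h.symm, hnz⟩ hm
  have hdt : dfun u u' a b t < 0 := by simp only [dfun]; linarith
  have hcont : Continuous (dfun u u' a b) := by
    unfold dfun uSeg; fun_prop
  have htm : t ≠ m := by
    rintro rfl
    linarith
  rcases lt_or_gt_of_ne htm with h | h
  · obtain ⟨c, hc, hc0⟩ := intermediate_value_Ioo h.le hcont.continuousOn
      (show (0:ℝ) ∈ Set.Ioo (dfun u u' a b t) (dfun u u' a b m) from ⟨hdt, hdm⟩)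
    refine hbet c ⟨a, b, hc0, hnz⟩ ?_
    rwa [min_eq_left h.le, max_eq_right h.le]
  · have hmt : m ≤ t := le_of_lt h
    obtain ⟨c, hc, hc0⟩ := intermediate_value_Ioo' hmt hcont.continuousOn
      (show (0:ℝ) ∈ Set.Ioo (dfun u u' a b t) (dfun u u' a b m) from ⟨hdt, hdm⟩)
    refine hbet c ⟨a, b, hc0, hnz⟩ ?_
    rwa [min_eq_right hmt, max_eq_left hmt]

noncomputable def enumR (T : Finset ℝ) (k : ℕ) (hk : T.card = k + 1) (j : ℕ) : ℝ :=
  ((T.orderIsoOfFin hk) ⟨min j k, by omega⟩ : ℝ)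

lemma enumR_mem (T : Finset ℝ) (k : ℕ) (hk : T.card = k + 1) (j : ℕ) :
    enumR T k hk j ∈ T :=
  ((T.orderIsoOfFin hk) ⟨min j k, by omega⟩).2

lemma enumR_mono (T : Finset ℝ) (k : ℕ) (hk : T.card = k + 1) :
    Monotone (enumR T k hk) := by
  intro i j hij
  unfold enumR
  apply Subtype.coe_le_coe.2
  apply (T.orderIsoOfFin hk).monotone
  simp only [Fin.mk_le_mk]
  omega

lemma enumR_strict (T : Finset ℝ) (k : ℕ) (hk : T.card = k + 1) (i : ℕ) (h : i < k) :
    enumR T k hk i < enumR T k hk (i + 1) := by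
  unfold enumR
  apply Subtype.coe_lt_coe.2
  apply (T.orderIsoOfFin hk).strictMono
  simp only [Fin.mk_lt_mk]
  omega

lemma enumR_zero_le (T : Finset ℝ) (k : ℕ) (hk : T.card = k + 1)
    (x : ℝ) (hx : x ∈ T) : enumR T k hk 0 ≤ x := by
  unfold enumR
  set e := T.orderIsoOfFin hk with he
  have h1 : e (e.symm ⟨x, hx⟩) = ⟨x, hx⟩ := e.apply_symm_apply _
  have h2 : e ⟨min 0 k, by omega⟩ ≤ e (e.symm ⟨x, hx⟩) := by
    apply e.monotone
    simp only [Fin.le_def]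
    omega
  rw [h1] at h2
  exact_mod_cast h2

lemma le_enumR_last (T : Finset ℝ) (k : ℕ) (hk : T.card = k + 1)
    (x : ℝ) (hx : x ∈ T) : x ≤ enumR T k hk k := by
  unfold enumR
  set e := T.orderIsoOfFin hk with he
  have h1 : e (e.symm ⟨x, hx⟩) = ⟨x, hx⟩ := e.apply_symm_apply _
  have h2 : e (e.symm ⟨x, hx⟩) ≤ e ⟨min k k, by omega⟩ := by
    apply e.monotone
    simp only [Fin.le_def]
    have := (e.symm ⟨x, hx⟩).isLt
    omega
  rw [h1] at h2
  exact_mod_cast h2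

lemma enumR_gap (T : Finset ℝ) (k : ℕ) (hk : T.card = k + 1) (i : ℕ) (hik : i < k)
    (x : ℝ) (hx : x ∈ T) :
    ¬ (enumR T k hk i < x ∧ x < enumR T k hk (i + 1)) := by
  unfold enumR
  set e := T.orderIsoOfFin hk with he
  rintro ⟨h1, h2⟩
  have hx1 : e (e.symm ⟨x, hx⟩) = ⟨x, hx⟩ := e.apply_symm_apply _
  have hlt1 : (⟨min i k, by omega⟩ : Fin (k + 1)) < e.symm ⟨x, hx⟩ := by
    rw [← e.lt_iff_lt, hx1]
    exact_mod_cast h1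
  have hlt2 : e.symm ⟨x, hx⟩ < (⟨min (i + 1) k, by omega⟩ : Fin (k + 1)) := by
    rw [← e.lt_iff_lt, hx1]
    exact_mod_cast h2
  rw [Fin.lt_def] at hlt1 hlt2
  simp only [] at hlt1 hlt2
  omega

/-- The segment between utility functions consistent with `R` and `R'` passes
through a finite sequence of weak orders `R = R^0, …, R^S = R'` such that each
consecutive pair is a multi-separation in one direction or the other. -/
theorem segment_passes_through_multi_separations {α : Type} [Fintype α]
    (R R' : α → α → Prop) (hR : TotalPreorder R) (hR' : TotalPreorder R')
    (u u' : α → ℝ) (hu : ConsistentStrict u R) (hu' : ConsistentStrict u' R') :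
    ∃ (S : ℕ) (β : Fin (S + 1) → ℝ),
      Monotone β ∧ β 0 = 0 ∧ β (Fin.last S) = 1 ∧
      (∀ a b, ordOf (uSeg u u' (β 0)) a b ↔ R a b) ∧
      (∀ a b, ordOf (uSeg u u' (β (Fin.last S))) a b ↔ R' a b) ∧
      ∀ s : Fin S,
        MultiSepPair (ordOf (uSeg u u' (β s.castSucc))) (ordOf (uSeg u u' (β s.succ))) := by
  classical
  have hCfin : (crossSet u u').Finite := crossSet_finite u u'
  have hCfin' : ((crossSet u u') ∩ Set.Icc 0 1).Finite := hCfin.inter_of_left _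
  set T : Finset ℝ := hCfin'.toFinset ∪ {0, 1} with hT
  have h0T : (0:ℝ) ∈ T := by simp [hT]
  have h1T : (1:ℝ) ∈ T := by simp [hT]
  have hTIcc : ∀ x ∈ T, x ∈ Set.Icc (0:ℝ) 1 := by
    intro x hx
    rcases Finset.mem_union.1 hx with h | h
    · exact (hCfin'.mem_toFinset.1 h).2
    · rcases Finset.mem_insert.1 h with h | h
      · simp [h]
      · rw [Finset.mem_singleton.1 h]; exact ⟨zero_le_one, le_refl 1⟩
  have hTmem : ∀ c ∈ crossSet u u', c ∈ Set.Icc (0:ℝ) 1 → c ∈ T := fun c hc hc' =>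
    Finset.mem_union_left _ (hCfin'.mem_toFinset.2 ⟨hc, hc'⟩)
  obtain ⟨k, hk⟩ : ∃ k, T.card = k + 1 := by
    have : 0 < T.card := Finset.card_pos.2 ⟨0, h0T⟩
    exact ⟨T.card - 1, by omega⟩
  set g : ℕ → ℝ := enumR T k hk with hg
  have hgIcc : ∀ j, g j ∈ Set.Icc (0:ℝ) 1 := fun j => hTIcc _ (enumR_mem T k hk j)
  have hg0 : g 0 = 0 :=
    le_antisymm (enumR_zero_le T k hk 0 h0T) (hgIcc 0).1
  have hgk : g k = 1 :=
    le_antisymm (hgIcc k).2 (le_enumR_last T k hk 1 h1T)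
  have hgmono : Monotone g := enumR_mono T k hk
  have hgstep : ∀ i, i < k → g i < g (i + 1) := fun i h => enumR_strict T k hk i h
  have hgap : ∀ i, i < k → ∀ c ∈ crossSet u u', ¬ (g i < c ∧ c < g (i + 1)) := by
    rintro i hik c hc ⟨h1, h2⟩
    have hcI : c ∈ Set.Icc (0:ℝ) 1 :=
      ⟨le_trans (hgIcc i).1 h1.le, le_trans h2.le (hgIcc (i + 1)).2⟩
    exact enumR_gap T k hk i hik c (hTmem c hc hcI) ⟨h1, h2⟩
  have hstep : ∀ i, i < k →
      (∀ a b, ordOf (uSeg u u' ((g i + g (i + 1)) / 2)) a b →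
        ordOf (uSeg u u' (g i)) a b) ∧
      (∀ a b, ordOf (uSeg u u' ((g i + g (i + 1)) / 2)) a b →
        ordOf (uSeg u u' (g (i + 1))) a b) := by
    intro i hik
    have hlt := hgstep i hik
    set m := (g i + g (i + 1)) / 2 with hmdef
    have hm1 : g i < m := by rw [hmdef]; linarith
    have hm2 : m < g (i + 1) := by rw [hmdef]; linarith
    have hmC : m ∉ crossSet u u' := fun h => hgap i hik m h ⟨hm1, hm2⟩
    constructor
    · apply cross_key u u' (g i) m hmC
      intro c hc hcI
      rw [min_eq_left hm1.le, max_eq_right hm1.le] at hcI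
      exact hgap i hik c hc ⟨hcI.1, hcI.2.trans hm2⟩
    · apply cross_key u u' (g (i + 1)) m hmC
      intro c hc hcI
      rw [min_eq_right hm2.le, max_eq_left hm2.le] at hcI
      exact hgap i hik c hc ⟨hm1.trans hcI.1, hcI.2⟩
  set β : Fin (2 * k + 1) → ℝ :=
    fun j => (g ((j : ℕ) / 2) + g (((j : ℕ) + 1) / 2)) / 2 with hβ
  have hβmono : Monotone β := by
    intro i j hij
    have hv : (i : ℕ) ≤ (j : ℕ) := hij
    have h1 : (i : ℕ) / 2 ≤ (j : ℕ) / 2 := by omega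
    have h2 : ((i : ℕ) + 1) / 2 ≤ ((j : ℕ) + 1) / 2 := by omega
    have g1 := hgmono h1
    have g2 := hgmono h2
    simp only [hβ]
    linarith
  have hβ0 : β 0 = 0 := by
    simp only [hβ]
    norm_num [hg0]
  have hβlast : β (Fin.last (2 * k)) = 1 := by
    simp only [hβ, Fin.val_last]
    have e1 : 2 * k / 2 = k := by omega
    have e2 : (2 * k + 1) / 2 = k := by omega
    rw [e1, e2, hgk]
    norm_num
  have hu0 : uSeg u u' 0 = u := by funext x; simp [uSeg]
  have hu1 : uSeg u u' 1 = u' := by funext x; simp [uSeg]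
  refine ⟨2 * k, β, hβmono, hβ0, hβlast, ?_, ?_, ?_⟩
  · rw [hβ0, hu0]
    exact fun a b => ordOf_iff hR hu a b
  · rw [hβlast, hu1]
    exact fun a b => ordOf_iff hR' hu' a b
  · intro s
    have hs : (s : ℕ) < 2 * k := s.isLt
    have hvc : ((s.castSucc : Fin (2 * k + 1)) : ℕ) = (s : ℕ) := rfl
    have hvs : ((s.succ : Fin (2 * k + 1)) : ℕ) = (s : ℕ) + 1 := rfl
    rcases Nat.even_or_odd (s : ℕ) with ⟨i, hi⟩ | ⟨i, hi⟩
    · have hik : i < k := by omega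
      have hβc : β s.castSucc = g i := by
        simp only [hβ]
        have d1 : ((s.castSucc : Fin (2 * k + 1)) : ℕ) / 2 = i := by rw [hvc]; omega
        have d2 : (((s.castSucc : Fin (2 * k + 1)) : ℕ) + 1) / 2 = i := by rw [hvc]; omega
        rw [d1, d2]
        ring
      have hβs : β s.succ = (g i + g (i + 1)) / 2 := by
        simp only [hβ]
        have d1 : ((s.succ : Fin (2 * k + 1)) : ℕ) / 2 = i := by rw [hvs]; omega
        have d2 : (((s.succ : Fin (2 * k + 1)) : ℕ) + 1) / 2 = i + 1 := by rw [hvs]; omega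
        rw [d1, d2]
      rw [hβc, hβs]
      exact Or.inl (hstep i hik).1
    · have hik : i < k := by omega
      have hβc : β s.castSucc = (g i + g (i + 1)) / 2 := by
        simp only [hβ]
        have d1 : ((s.castSucc : Fin (2 * k + 1)) : ℕ) / 2 = i := by rw [hvc]; omega
        have d2 : (((s.castSucc : Fin (2 * k + 1)) : ℕ) + 1) / 2 = i + 1 := by rw [hvc]; omega
        rw [d1, d2]
      have hβs : β s.succ = g (i + 1) := by
        simp only [hβ]
        have d1 : ((s.succ : Fin (2 * k + 1)) : ℕ) / 2 = i + 1 := by rw [hvs]; omega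
        have d2 : (((s.succ : Fin (2 * k + 1)) : ℕ) + 1) / 2 = i + 1 := by rw [hvs]; omega
        rw [d1, d2]
        ring
      rw [hβc, hβs]
      exact Or.inr (hstep i hik).2
end

section
/- If a mechanism φ is multi-separation strategyproof, then it is strategyproof: for all weak orders R, R', φ(R) first order-stochastically dominates φ(R') at R. -/
open Finset

/-- `(R,R')` is a multi-separation: `R'` refines `R`, i.e. `R'` is obtained from `R`
by partitioning each indifference class `M_k` of `R` into `L_k ≥ 1` strictly ranked
subclasses, preserving the between-class rankings of `R`. -/
def IsMultiSeparation {α : Type} [Fintype α] (R R' : α → ℕ) : Prop :=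
  Canonical R ∧ Canonical R' ∧ ∀ a b, R a < R b → R' a < R' b

/-!
Read a utility function `u` as the weak order `rankOf u` it induces. It suffices to show
`u ⬝ᵥ φ (rankOf v) ≤ u ⬝ᵥ φ (rankOf u)` for all utilities `u, v`: a weakly consistent `u`
(such as the indicator of an upper contour set) is the limit of strictly consistent ones.
If no pair of alternatives is ranked in opposite strict orders by `u` and `v`, then
`rankOf (u + v)` refines both `rankOf u` and `rankOf v`, and the two multi-separations give
the inequality. Otherwise, let `w` be the first point on the segment from `u` to `v` where
some discordant pair becomes indifferent: `w` has no discordance with `u`, and fewer with `v`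
than `u` has. Induction on the number of discordant pairs, applied to `(w, v)` and `(v, w)`,
gives `u ⬝ᵥ φ (rankOf v) ≤ u ⬝ᵥ φ (rankOf w)`, because `(1 - τ) • u = w - τ • v`.
-/

section WeakOrder

variable {α : Type}

lemma Canonical.le_of_lt_imp_lt {R R' : α → ℕ} (hR : Canonical R)
    (h : ∀ a b, R a < R b → R' a < R' b) (a : α) : R a ≤ R' a := by
  suffices ∀ n a, R a = n → n ≤ R' a from this _ a rfl
  intro n
  induction n with
  | zero => simp
  | succ n ih =>
    intro a ha
    obtain ⟨b, hb⟩ := hR a n (by omega)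
    have := h b a (by omega)
    have := ih b hb
    omega

lemma Canonical.eq_of_lt_iff {R R' : α → ℕ} (hR : Canonical R) (hR' : Canonical R')
    (h : ∀ a b, R a < R b ↔ R' a < R' b) : R = R' :=
  funext fun a => le_antisymm (hR.le_of_lt_imp_lt (fun a b => (h a b).1) a)
    (hR'.le_of_lt_imp_lt (fun a b => (h a b).2) a)

def ConsistentWith (u : α → ℝ) (R : α → ℕ) : Prop :=
  ∀ a b, R a ≤ R b → u b ≤ u a

/-- Abel summation, peeling off the last indifference class of `R` on `s`. -/
lemma sum_mul_nonneg_of_cumulative_nonneg {R : α → ℕ} {u d : α → ℝ} (s : Finset α)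
    (hu : ∀ a ∈ s, ∀ b ∈ s, R a ≤ R b → u b ≤ u a) (hu₀ : ∀ a ∈ s, 0 ≤ u a)
    (hd : ∀ a ∈ s, 0 ≤ ∑ j ∈ s with R j ≤ R a, d j) : 0 ≤ ∑ j ∈ s, u j * d j := by
  induction s using Finset.strongInduction generalizing u with
  | H s ih =>
  rcases s.eq_empty_or_nonempty with rfl | hs
  · simp
  obtain ⟨a₀, ha₀, hmax⟩ := exists_max_image s R hs
  set c := u a₀
  set s' := {j ∈ s | R j < R a₀}
  have hbottom : ∀ j ∈ s, j ∉ s' → u j = c := fun j hj hj' => by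
    have hR : R j = R a₀ := le_antisymm (hmax j hj) (by simpa [s', hj] using hj')
    exact le_antisymm (hu _ ha₀ _ hj hR.ge) (hu _ hj _ ha₀ hR.le)
  have hshift : ∑ j ∈ s', (u j - c) * d j = ∑ j ∈ s, (u j - c) * d j :=
    sum_subset (filter_subset _ _) fun j hj hj' => by simp [hbottom j hj hj']
  have hs'_nonneg : 0 ≤ ∑ j ∈ s', (u j - c) * d j := by
    refine ih s' (filter_ssubset.mpr ⟨a₀, ha₀, lt_irrefl _⟩) (fun a ha b hb hab => ?_)
      (fun a ha => ?_) (fun a ha => ?_)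
    · exact sub_le_sub_right (hu a (mem_of_mem_filter a ha) b (mem_of_mem_filter b hb) hab) c
    · have ha' := mem_of_mem_filter a ha
      exact sub_nonneg.mpr (hu a ha' a₀ ha₀ (hmax a ha'))
    · have hlt := (mem_filter.mp ha).2
      have : {j ∈ s' | R j ≤ R a} = {j ∈ s | R j ≤ R a} := by
        rw [filter_filter]
        exact filter_congr fun j _ => ⟨And.right, fun h => ⟨h.trans_lt hlt, h⟩⟩
      rw [this]
      exact hd a (mem_of_mem_filter a ha)
  have htotal : 0 ≤ ∑ j ∈ s, d j := by
    simpa [filter_true_of_mem hmax] using hd a₀ ha₀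
  calc 0 ≤ ∑ j ∈ s', (u j - c) * d j + c * ∑ j ∈ s, d j :=
        add_nonneg hs'_nonneg (mul_nonneg (hu₀ a₀ ha₀) htotal)
    _ = ∑ j ∈ s, u j * d j := by
        rw [hshift, mul_sum, ← sum_add_distrib]
        exact sum_congr rfl fun j _ => by ring

end WeakOrder

section Ranking

variable {α β : Type} [Fintype α] [LinearOrder β]

noncomputable def rankOf (u : α → β) (a : α) : ℕ :=
  #{x ∈ univ.image u | u a < x}

lemma rankOf_le_rankOf {u : α → β} {a b : α} (h : u a ≤ u b) : rankOf u b ≤ rankOf u a :=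
  card_le_card fun _ hx => by
    simp only [mem_filter] at hx ⊢
    exact ⟨hx.1, h.trans_lt hx.2⟩

lemma rankOf_lt_rankOf_iff {u : α → β} {a b : α} : rankOf u a < rankOf u b ↔ u b < u a := by
  refine ⟨fun h => lt_of_not_ge fun hab => h.not_ge (rankOf_le_rankOf hab), fun h => ?_⟩
  refine card_lt_card ⟨fun _ hx => ?_, fun hsub => ?_⟩
  · simp only [mem_filter] at hx ⊢
    exact ⟨hx.1, h.trans hx.2⟩
  · have := hsub (mem_filter.mpr ⟨mem_image_of_mem u (mem_univ a), h⟩)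
    exact (mem_filter.mp this).2.false

lemma rankOf_le_rankOf_iff {u : α → β} {a b : α} :
    rankOf u a ≤ rankOf u b ↔ u b ≤ u a := by
  rw [← not_lt, rankOf_lt_rankOf_iff, not_lt]

/-- The level counts `x ↦ #{y ∈ T | x < y}` are injective on `T = u(α)` and land in
`range #T`, so by cardinality they hit every `k < #T`. -/
lemma canonical_rankOf (u : α → β) : Canonical (rankOf u) := by
  intro a k hk
  set T := univ.image u
  let level : β → ℕ := fun x => #{y ∈ T | x < y}
  have hlevel_lt : ∀ x ∈ T, ∀ y ∈ T, x < y → level y < level x := by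
    intro x hx y hy hxy
    obtain ⟨b, -, rfl⟩ := mem_image.mp hx
    obtain ⟨c, -, rfl⟩ := mem_image.mp hy
    exact rankOf_lt_rankOf_iff.mpr hxy
  have hmaps : Set.MapsTo level T (range #T) := fun x hx => mem_range.mpr <|
    card_lt_card (filter_ssubset.mpr ⟨x, hx, lt_irrefl x⟩)
  have hinj : Set.InjOn level T := fun x hx y hy hxy => by
    by_contra hne
    rcases lt_or_gt_of_ne hne with h | h
    · exact (hlevel_lt x hx y hy h).ne' hxy
    · exact (hlevel_lt y hy x hx h).ne hxy
  obtain ⟨x, hx, hxk⟩ := surjOn_of_injOn_of_card_le level hmaps hinj (by simp)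
    (mem_range.mpr (hk.trans_lt (mem_range.mp (hmaps (mem_image_of_mem u (mem_univ a))))))
  obtain ⟨b, -, rfl⟩ := mem_image.mp hx
  exact ⟨b, hxk⟩

lemma rankOf_eq_of_lt_iff {u : α → β} {R : α → ℕ} (hR : Canonical R)
    (h : ∀ a b, R a < R b ↔ u b < u a) : rankOf u = R :=
  (canonical_rankOf u).eq_of_lt_iff hR fun a b => rankOf_lt_rankOf_iff.trans (h a b).symm

lemma consistentWith_rankOf (u : α → ℝ) : ConsistentWith u (rankOf u) :=
  fun _ _ h => rankOf_le_rankOf_iff.mp h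

lemma isMultiSeparation_rankOf {u v : α → ℝ} (h : ∀ a b, u b < u a → v b < v a) :
    IsMultiSeparation (rankOf u) (rankOf v) :=
  ⟨canonical_rankOf u, canonical_rankOf v, fun a b hab =>
    rankOf_lt_rankOf_iff.mpr (h a b (rankOf_lt_rankOf_iff.mp hab))⟩

end Ranking

section Dominance

variable {α : Type} [Fintype α]

lemma SD.dotProduct_le {R : α → ℕ} {x y u : α → ℝ} (h : SD R x y)
    (htot : ∑ a, x a = ∑ a, y a) (hu : ConsistentWith u R) : u ⬝ᵥ y ≤ u ⬝ᵥ x := by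
  rcases isEmpty_or_nonempty α with hα | hα
  · simp [dotProduct]
  obtain ⟨b, -, hb⟩ := exists_max_image univ R univ_nonempty
  have hshift : u ⬝ᵥ x - u ⬝ᵥ y = ∑ j, (u j - u b) * (x j - y j) := by
    simp only [dotProduct, sub_mul, mul_sub, sum_sub_distrib, ← mul_sum, htot]
    ring
  rw [← sub_nonneg, hshift]
  refine sum_mul_nonneg_of_cumulative_nonneg univ (fun a _ b _ hab => sub_le_sub_right
    (hu a b hab) _) (fun a _ => sub_nonneg.mpr (hu a b (hb a (mem_univ a)))) fun a _ => ?_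
  rw [sum_sub_distrib, sub_nonneg]
  exact h a

lemma SD.of_forall_dotProduct_le {R : α → ℕ} {x y : α → ℝ}
    (h : ∀ u, ConsistentWith u R → u ⬝ᵥ y ≤ u ⬝ᵥ x) : SD R x y := by
  intro a
  have hind : ConsistentWith (fun j => if R j ≤ R a then 1 else 0) R := by
    intro b c hbc
    dsimp only
    split_ifs <;> first | omega | norm_num
  simpa [dotProduct, sum_filter] using h _ hind

end Dominance

section Discordance

variable {α : Type} [Fintype α]

noncomputable def discordant (u v : α → ℝ) : Finset (α × α) :=
  univ.filter fun p => u p.2 < u p.1 ∧ v p.1 < v p.2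

lemma mem_discordant {u v : α → ℝ} {p : α × α} :
    p ∈ discordant u v ↔ u p.2 < u p.1 ∧ v p.1 < v p.2 := by
  simp [discordant]

lemma discordant_eq_empty_iff {u v : α → ℝ} :
    discordant u v = ∅ ↔ ∀ a b, u b < u a → v b ≤ v a := by
  simp [eq_empty_iff_forall_notMem, mem_discordant]

lemma card_discordant_comm (u v : α → ℝ) : #(discordant u v) = #(discordant v u) :=
  card_nbij' Prod.swap Prod.swap (fun p hp => by simpa [mem_discordant, and_comm] using hp)
    (fun p hp => by simpa [mem_discordant, and_comm] using hp) (fun _ _ => rfl) (fun _ _ => rfl)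

/-- The point `w` of the segment `[u, v]` at the smallest crossing time of a discordant pair:
before it no pair changes its strict order, and at it that pair becomes indifferent. -/
lemma exists_segment_point_discordant {u v : α → ℝ} (h : (discordant u v).Nonempty) :
    ∃ τ : ℝ, 0 < τ ∧ τ < 1 ∧ discordant u ((1 - τ) • u + τ • v) = ∅ ∧
      #(discordant ((1 - τ) • u + τ • v) v) < #(discordant u v) := by
  classical
  obtain ⟨p₀, hp₀, hmin⟩ := exists_min_image (discordant u v)
    (fun p => (u p.1 - u p.2) / ((u p.1 - u p.2) + (v p.2 - v p.1))) h
  set τ := (u p₀.1 - u p₀.2) / ((u p₀.1 - u p₀.2) + (v p₀.2 - v p₀.1))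
  set w := (1 - τ) • u + τ • v
  have hw : ∀ a, w a = (1 - τ) * u a + τ * v a := fun _ => rfl
  obtain ⟨hu₀, hv₀⟩ := mem_discordant.mp hp₀
  have hτ₀ : 0 < τ := div_pos (by linarith) (by linarith)
  have hτ₁ : τ < 1 := (div_lt_one (by linarith)).mpr (by linarith)
  have hp₀w : w p₀.1 = w p₀.2 := by
    have hcross : τ * ((u p₀.1 - u p₀.2) + (v p₀.2 - v p₀.1)) = u p₀.1 - u p₀.2 :=
      div_mul_cancel₀ _ (by linarith)
    rw [hw, hw]
    linear_combination -hcross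
  have hnot_crossed : ∀ p ∈ discordant u v, w p.2 ≤ w p.1 := fun p hp => by
    obtain ⟨hu, hv⟩ := mem_discordant.mp hp
    have := (le_div_iff₀ (by linarith)).mp (hmin p hp)
    rw [hw, hw]
    nlinarith
  refine ⟨τ, hτ₀, hτ₁, ?_, ?_⟩
  · show discordant u w = ∅
    refine discordant_eq_empty_iff.mpr fun a b hab => ?_
    by_cases hv : v a < v b
    · exact hnot_crossed (a, b) (mem_discordant.mpr ⟨hab, hv⟩)
    · rw [hw, hw]
      nlinarith
  · show #(discordant w v) < _
    refine card_lt_card (LE.le.trans_ssubset (fun p hp => ?_) (erase_ssubset hp₀))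
    obtain ⟨hw', hv⟩ := mem_discordant.mp hp
    have hu : u p.2 < u p.1 := by
      by_contra hu
      rw [hw, hw] at hw'
      nlinarith
    refine mem_erase.mpr ⟨fun hp => ?_, mem_discordant.mpr ⟨hu, hv⟩⟩
    subst hp
    exact hw'.ne' hp₀w

end Discordance

lemma nonneg_of_forall_pos_add_mul_nonneg {a b : ℝ} (h : ∀ t > 0, 0 ≤ a + t * b) :
    0 ≤ a := by
  have hcont : Continuous fun t : ℝ => a + t * b := by fun_prop
  have hlim : Filter.Tendsto (fun t => a + t * b) (nhdsWithin 0 (Set.Ioi 0)) (nhds a) := by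
    simpa using (hcont.tendsto 0).mono_left nhdsWithin_le_nhds
  exact ge_of_tendsto hlim (eventually_nhdsWithin_of_forall h)

section Mechanism

variable {α : Type} [Fintype α]

def MultiSepStrategyproof (φ : (α → ℕ) → α → ℝ) : Prop :=
  ∀ R R', IsMultiSeparation R R' → SD R (φ R) (φ R') ∧ SD R' (φ R') (φ R)

variable {φ : (α → ℕ) → α → ℝ}

/-- `rankOf (u + v)` refines both `rankOf u` and `rankOf v`. -/
lemma dotProduct_le_of_discordant_eq_empty (htot : ∀ R R', ∑ a, φ R a = ∑ a, φ R' a)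
    (hφ : MultiSepStrategyproof φ) {u v : α → ℝ} (h : discordant u v = ∅) :
    u ⬝ᵥ φ (rankOf v) ≤ u ⬝ᵥ φ (rankOf u) := by
  rw [discordant_eq_empty_iff] at h
  have hu : ∀ a b, u b < u a → (u + v) b < (u + v) a :=
    fun a b hab => add_lt_add_of_lt_of_le hab (h a b hab)
  have hv : ∀ a b, v b < v a → (u + v) b < (u + v) a :=
    fun a b hab => add_lt_add_of_le_of_lt (not_lt.mp fun hba => (h b a hba).not_gt hab) hab
  have hcons : ConsistentWith u (rankOf (u + v)) := fun a b hab =>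
    not_lt.mp fun hlt => (rankOf_le_rankOf_iff.mp hab).not_gt (hu b a hlt)
  calc u ⬝ᵥ φ (rankOf v) ≤ u ⬝ᵥ φ (rankOf (u + v)) :=
        (hφ _ _ (isMultiSeparation_rankOf hv)).2.dotProduct_le (htot _ _) hcons
    _ ≤ u ⬝ᵥ φ (rankOf u) :=
        (hφ _ _ (isMultiSeparation_rankOf hu)).1.dotProduct_le (htot _ _) (consistentWith_rankOf u)

lemma dotProduct_rankOf_le (htot : ∀ R R', ∑ a, φ R a = ∑ a, φ R' a)
    (hφ : MultiSepStrategyproof φ) (u v : α → ℝ) :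
    u ⬝ᵥ φ (rankOf v) ≤ u ⬝ᵥ φ (rankOf u) := by
  induction hn : #(discordant u v) using Nat.strong_induction_on generalizing u v with
  | _ n ih =>
  rcases (discordant u v).eq_empty_or_nonempty with h | h
  · exact dotProduct_le_of_discordant_eq_empty htot hφ h
  obtain ⟨τ, hτ₀, hτ₁, huw, hcard⟩ := exists_segment_point_discordant h
  set w := (1 - τ) • u + τ • v
  have hwv := ih _ (hn ▸ hcard) w v rfl
  have hvw := ih _ (hn ▸ card_discordant_comm w v ▸ hcard) v w rfl
  have hsplit : ∀ x, (1 - τ) * (u ⬝ᵥ x) = w ⬝ᵥ x - τ * (v ⬝ᵥ x) := fun x => by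
    simp only [w, add_dotProduct, smul_dotProduct, smul_eq_mul]
    ring
  have : (1 - τ) * (u ⬝ᵥ φ (rankOf v)) ≤ (1 - τ) * (u ⬝ᵥ φ (rankOf w)) := by
    rw [hsplit, hsplit]
    nlinarith
  exact (le_of_mul_le_mul_left this (by linarith)).trans
    (dotProduct_le_of_discordant_eq_empty htot hφ huw)

lemma dotProduct_le_of_consistentWith (htot : ∀ R R', ∑ a, φ R a = ∑ a, φ R' a)
    (hφ : MultiSepStrategyproof φ) {R : α → ℕ} (hR : Canonical R) {u : α → ℝ}
    (hu : ConsistentWith u R) (v : α → ℝ) : u ⬝ᵥ φ (rankOf v) ≤ u ⬝ᵥ φ R := by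
  set r : α → ℝ := fun a => -(R a : ℝ)
  have hrank : ∀ t : ℝ, 0 < t → rankOf (u + t • r) = R := fun t ht =>
    rankOf_eq_of_lt_iff hR fun a b => by
      simp only [Pi.add_apply, Pi.smul_apply, smul_eq_mul, r]
      constructor
      · intro hab
        have := hu a b hab.le
        have : (R a : ℝ) < R b := by exact_mod_cast hab
        nlinarith
      · intro hab
        by_contra hba
        have := hu b a (not_lt.mp hba)
        have : (R b : ℝ) ≤ R a := by exact_mod_cast not_lt.mp hba
        nlinarith
  rw [← sub_nonneg, ← dotProduct_sub]
  refine nonneg_of_forall_pos_add_mul_nonneg (b := r ⬝ᵥ (φ R - φ (rankOf v))) fun t ht => ?_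
  have := dotProduct_rankOf_le htot hφ (u + t • r) v
  rwa [hrank t ht, ← sub_nonneg, ← dotProduct_sub, add_dotProduct, smul_dotProduct,
    smul_eq_mul] at this

end Mechanism

/-- If a mechanism is multi-separation strategyproof (for every multi-separation
`(R,R')`, `φ(R)` dominates `φ(R')` at `R` and `φ(R')` dominates `φ(R)` at `R'`),
then it is strategyproof. -/
theorem multi_sep_sp_implies_sp {α : Type} [Fintype α]
    (φ : (α → ℕ) → α → ℝ) (hlot : ∀ R, IsLottery (φ R))
    (hmsp : ∀ R R', IsMultiSeparation R R' →
      SD R (φ R) (φ R') ∧ SD R' (φ R') (φ R)) :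
    Strategyproof φ := by
  have htot : ∀ R R', ∑ a, φ R a = ∑ a, φ R' a := fun R R' =>
    (hlot R).2.trans (hlot R').2.symm
  intro R R' hR hR'
  have hrank : rankOf (fun a => -(R' a : ℝ)) = R' := rankOf_eq_of_lt_iff hR' fun a b => by simp
  refine SD.of_forall_dotProduct_le fun u hu => ?_
  simpa only [hrank] using dotProduct_le_of_consistentWith htot hmsp hR hu fun a => -(R' a : ℝ)
end
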